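/- arXiv:2401.17899 — 13 statements merged into one kernel-verified Lean document; each statement's English description precedes it below -/
import Mathlib

section
/- Let S ⊆ ℝⁿ. If there exists an infinite sequence of points x¹, x², x³, … in S that are pairwise distinct and such that for every pair of distinct indices j₁ ≠ j₂ the midpoint (x^{j₁} + x^{j₂})/2 does not belong to S, then S is not MICP-representable. -/
/-- A set `S ⊆ E` (think `E = ℝⁿ`) is mixed-integer convex programming representable
(MICP-R) if there exist nonnegative integers `p`, `d` and a closed convex set
`M ⊆ E × ℝᵖ × ℝᵈ` such that `x ∈ S` iff there are `y ∈ ℝᵖ` and `z ∈ ℝᵈ` with all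
coordinates of `z` integral and `(x, y, z) ∈ M`. -/
def IsMICPR {E : Type*} [AddCommGroup E] [Module ℝ E] [TopologicalSpace E]
    (S : Set E) : Prop :=
  ∃ (p d : ℕ) (M : Set (E × (Fin p → ℝ) × (Fin d → ℝ))),
    IsClosed M ∧ Convex ℝ M ∧
      ∀ x : E, x ∈ S ↔ ∃ (y : Fin p → ℝ) (z : Fin d → ℝ),
        (∀ i, ∃ k : ℤ, z i = (k : ℝ)) ∧ (x, y, z) ∈ M

/-!
If `S` is cut out of a convex set `M` by requiring `z ∈ ℤᵈ`, then among infinitely many points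
of `S` two have integer witnesses `z₁, z₂` of the same parity (there are only `2ᵈ` parity
classes). The midpoint of the two lifted points lies in `M` by convexity and its last component
`(z₁ + z₂) / 2` is again integral, so the midpoint of the two points lies in `S`.
-/

theorem exists_half_add_eq_intCast_of_intCast_eq {a b : ℤ} (h : (a : ZMod 2) = b) :
    ∃ k : ℤ, (2⁻¹ : ℝ) * (a + b) = k := by
  obtain ⟨m, hm⟩ := (ZMod.intCast_eq_intCast_iff_dvd_sub a b 2).mp h
  refine ⟨a + m, ?_⟩
  have hb : (b : ℝ) = a + 2 * m := by exact_mod_cast (by omega : b = a + 2 * m)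
  rw [hb]
  push_cast
  ring

theorem IsMICPR.exists_ne_half_add_mem {E : Type*} [AddCommGroup E] [Module ℝ E]
    [TopologicalSpace E] {S : Set E} (hS : IsMICPR S) {ι : Type*} [Infinite ι] (x : ι → E)
    (hx : ∀ j, x j ∈ S) : ∃ j₁ j₂, j₁ ≠ j₂ ∧ (2⁻¹ : ℝ) • (x j₁ + x j₂) ∈ S := by
  obtain ⟨p, d, M, -, hconv, hM⟩ := hS
  have hlift : ∀ j, ∃ (y : Fin p → ℝ) (k : Fin d → ℤ), (x j, y, fun i => (k i : ℝ)) ∈ M := by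
    intro j
    obtain ⟨y, z, hz, hxyz⟩ := (hM (x j)).1 (hx j)
    choose k hk using hz
    exact ⟨y, k, by simpa only [← hk] using hxyz⟩
  choose y k hk using hlift
  obtain ⟨j₁, j₂, hne, hparity⟩ :=
    Finite.exists_ne_map_eq_of_infinite fun j i => (k j i : ZMod 2)
  have hhalf : (0 : ℝ) ≤ 2⁻¹ := by norm_num
  have hmidM := hconv (hk j₁) (hk j₂) hhalf hhalf (by norm_num)
  simp only [← smul_add, Prod.smul_mk, Prod.mk_add_mk] at hmidM
  refine ⟨j₁, j₂, hne, (hM _).2 ⟨_, _, fun i => ?_, hmidM⟩⟩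
  exact exists_half_add_eq_intCast_of_intCast_eq (congrFun hparity i)

theorem not_micpr_of_midpoints_general {n : ℕ} (S : Set (Fin n → ℝ)) (x : ℕ → (Fin n → ℝ))
    (hmem : ∀ j, x j ∈ S)
    (hmid : ∀ j₁ j₂ : ℕ, j₁ ≠ j₂ → (2⁻¹ : ℝ) • (x j₁ + x j₂) ∉ S) :
    ¬ IsMICPR S := fun hS =>
  let ⟨j₁, j₂, hne, hmidS⟩ := hS.exists_ne_half_add_mem x hmem
  hmid j₁ j₂ hne hmidS

/-- If `S ⊆ ℝⁿ` contains an infinite sequence of pairwise distinct points such that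
the midpoint of any two distinct points of the sequence lies outside `S`, then `S`
is not MICP-representable. -/
theorem not_micpr_of_midpoints {n : ℕ} (S : Set (Fin n → ℝ)) (x : ℕ → (Fin n → ℝ))
    (hinj : Function.Injective x) (hmem : ∀ j, x j ∈ S)
    (hmid : ∀ j₁ j₂ : ℕ, j₁ ≠ j₂ → (2⁻¹ : ℝ) • (x j₁ + x j₂) ∉ S) :
    ¬ IsMICPR S :=
  not_micpr_of_midpoints_general S x hmem hmid
end

section
/- Let X ⊆ ℝⁿ be a nonempty compact convex set. Then the epigraph {(x, t) ∈ ℝⁿ × ℝ : x ∈ X, −‖x‖₁ ≤ t} of the reverse ℓ₁-norm function restricted to X is MICP-representable. -/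
open Finset

def IsBigMPosPart (R a y z : ℝ) : Prop :=
  0 ≤ y ∧ a ≤ y ∧ y ≤ R * z ∧ y - a ≤ R * (1 - z)

namespace IsBigMPosPart

variable {R a y z : ℝ}

theorem two_mul_sub_eq_abs (hR : 0 < R) (h : IsBigMPosPart R a y z) (hz : ∃ k : ℤ, z = k) :
    2 * y - a = |a| := by
  obtain ⟨hy, hay, hyz, hyaz⟩ := h
  obtain ⟨k, rfl⟩ := hz
  have hk : k = 0 ∨ k = 1 := by
    have h0 : (0 : ℝ) ≤ k := nonneg_of_mul_nonneg_right (hy.trans hyz) hR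
    have h1 : (0 : ℝ) ≤ 1 - k := nonneg_of_mul_nonneg_right (by linarith) hR
    have : 0 ≤ k ∧ k ≤ 1 := ⟨by exact_mod_cast h0, by exact_mod_cast sub_nonneg.mp h1⟩
    omega
  rcases hk with rfl | rfl
  · rw [Int.cast_zero, mul_zero] at hyz
    rw [abs_of_nonpos (by linarith)]
    linarith
  · rw [Int.cast_one, sub_self, mul_zero] at hyaz
    rw [abs_of_nonneg (by linarith)]
    linarith

theorem max_zero (ha : |a| ≤ R) :
    IsBigMPosPart R a (max a 0) (if 0 ≤ a then 1 else 0) := by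
  rw [abs_le] at ha
  by_cases h : 0 ≤ a
  · simp only [if_pos h, max_eq_left h]
    exact ⟨h, le_rfl, by linarith, by linarith⟩
  · simp only [if_neg h, max_eq_right (le_of_not_ge h)]
    exact ⟨le_rfl, le_of_not_ge h, by linarith, by linarith⟩

theorem convex_combo {a' y' z' s t : ℝ} (h : IsBigMPosPart R a y z)
    (h' : IsBigMPosPart R a' y' z') (hs : 0 ≤ s) (ht : 0 ≤ t) (hst : s + t = 1) :
    IsBigMPosPart R (s * a + t * a') (s * y + t * y') (s * z + t * z') := by
  obtain ⟨h0, h1, h2, h3⟩ := h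
  obtain ⟨h0', h1', h2', h3'⟩ := h'
  refine ⟨by positivity, by nlinarith, ?_, ?_⟩
  · nlinarith [mul_le_mul_of_nonneg_left h2 hs, mul_le_mul_of_nonneg_left h2' ht]
  · nlinarith [mul_le_mul_of_nonneg_left h3 hs, mul_le_mul_of_nonneg_left h3' ht]

theorem isClosed_setOf {α : Type*} [TopologicalSpace α] {f g h : α → ℝ}
    (hf : Continuous f) (hg : Continuous g) (hh : Continuous h) :
    IsClosed {w | IsBigMPosPart R (f w) (g w) (h w)} := by
  simp only [IsBigMPosPart, Set.ofPred_and]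
  refine (isClosed_le ?_ ?_).inter ((isClosed_le ?_ ?_).inter
    ((isClosed_le ?_ ?_).inter (isClosed_le ?_ ?_))) <;> fun_prop

end IsBigMPosPart

theorem two_mul_max_zero_sub (a : ℝ) : 2 * max a 0 - a = |a| := by
  rcases le_total 0 a with h | h
  · rw [max_eq_left h, abs_of_nonneg h]; ring
  · rw [max_eq_right h, abs_of_nonpos h]; ring

section NegL1Lift

variable {n : ℕ}

def negL1Lift (X : Set (Fin n → ℝ)) (R : ℝ) :
    Set (((Fin n → ℝ) × ℝ) × (Fin n → ℝ) × (Fin n → ℝ)) :=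
  {w | w.1.1 ∈ X ∧ (∀ i, IsBigMPosPart R (w.1.1 i) (w.2.1 i) (w.2.2 i)) ∧
    -∑ i, (2 * w.2.1 i - w.1.1 i) ≤ w.1.2}

theorem isClosed_negL1Lift {X : Set (Fin n → ℝ)} (hX : IsClosed X) (R : ℝ) :
    IsClosed (negL1Lift X R) := by
  simp only [negL1Lift, Set.ofPred_and, Set.ofPred_forall]
  refine (hX.preimage (by fun_prop)).inter ((isClosed_iInter fun i => ?_).inter
    (isClosed_le (by fun_prop) (by fun_prop)))
  exact IsBigMPosPart.isClosed_setOf (by fun_prop) (by fun_prop) (by fun_prop)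

theorem convex_negL1Lift {X : Set (Fin n → ℝ)} (hX : Convex ℝ X) (R : ℝ) :
    Convex ℝ (negL1Lift X R) := by
  rintro w ⟨hwX, hw, hwt⟩ w' ⟨hwX', hw', hwt'⟩ s t hs ht hst
  refine ⟨hX hwX hwX' hs ht hst, fun i => (hw i).convex_combo (hw' i) hs ht hst, ?_⟩
  have hsum : ∑ i, (2 * (s • w + t • w').2.1 i - (s • w + t • w').1.1 i) =
      s * ∑ i, (2 * w.2.1 i - w.1.1 i) + t * ∑ i, (2 * w'.2.1 i - w'.1.1 i) := by
    simp only [Prod.fst_add, Prod.snd_add, Prod.smul_fst, Prod.smul_snd, Pi.add_apply,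
      Pi.smul_apply, smul_eq_mul, mul_sum, ← sum_add_distrib]
    exact sum_congr rfl fun i _ => by ring
  change -∑ i, (2 * (s • w + t • w').2.1 i - (s • w + t • w').1.1 i) ≤ s * w.1.2 + t * w'.1.2
  rw [hsum]
  nlinarith [mul_le_mul_of_nonneg_left hwt hs, mul_le_mul_of_nonneg_left hwt' ht]

theorem exists_integral_mem_negL1Lift_iff {X : Set (Fin n → ℝ)} {R : ℝ} (hR : 0 < R)
    (hXR : ∀ x ∈ X, ∀ i, |x i| ≤ R) (xt : (Fin n → ℝ) × ℝ) :
    (∃ (y z : Fin n → ℝ), (∀ i, ∃ k : ℤ, z i = k) ∧ (xt, y, z) ∈ negL1Lift X R) ↔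
      xt.1 ∈ X ∧ -∑ i, |xt.1 i| ≤ xt.2 := by
  obtain ⟨x, t⟩ := xt
  constructor
  · rintro ⟨y, z, hz, hx, hyz, ht⟩
    refine ⟨hx, ?_⟩
    rwa [sum_congr rfl fun i _ => (hyz i).two_mul_sub_eq_abs hR (hz i)] at ht
  · rintro ⟨hx, ht⟩
    refine ⟨fun i => max (x i) 0, fun i => if 0 ≤ x i then 1 else 0, fun i => ?_, hx,
      fun i => IsBigMPosPart.max_zero (hXR x hx i), ?_⟩
    · by_cases h : 0 ≤ x i
      exacts [⟨1, by simp [h]⟩, ⟨0, by simp [h]⟩]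
    · simpa only [two_mul_max_zero_sub] using ht

end NegL1Lift

theorem epigraph_neg_l1_micpr_general {n : ℕ} (X : Set (Fin n → ℝ))
    (hcomp : IsCompact X) (hconv : Convex ℝ X) :
    IsMICPR {xt : (Fin n → ℝ) × ℝ | xt.1 ∈ X ∧ -(∑ i, |xt.1 i|) ≤ xt.2} := by
  obtain ⟨R, hR, hXR⟩ := hcomp.isBounded.exists_pos_norm_le
  have hXR' : ∀ x ∈ X, ∀ i, |x i| ≤ R := fun x hx i =>
    (Real.norm_eq_abs (x i) ▸ norm_le_pi_norm x i).trans (hXR x hx)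
  exact ⟨n, n, negL1Lift X R, isClosed_negL1Lift hcomp.isClosed R, convex_negL1Lift hconv R,
    fun xt => (exists_integral_mem_negL1Lift_iff hR hXR' xt).symm⟩

/-- For a nonempty compact convex `X ⊆ ℝⁿ`, the epigraph
`{(x, t) : x ∈ X, −‖x‖₁ ≤ t}` of the reverse `ℓ₁`-norm function restricted to `X`
is MICP-representable. -/
theorem epigraph_neg_l1_micpr {n : ℕ} (X : Set (Fin n → ℝ)) (hne : X.Nonempty)
    (hcomp : IsCompact X) (hconv : Convex ℝ X) :
    IsMICPR {xt : (Fin n → ℝ) × ℝ | xt.1 ∈ X ∧ -(∑ i, |xt.1 i|) ≤ xt.2} :=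
  epigraph_neg_l1_micpr_general X hcomp hconv
end

section
/- Let n ≥ 2, let p ∈ (1, ∞), and let X ⊆ ℝⁿ be a compact convex set with nonempty interior. Then the epigraph {(x, t) ∈ ℝⁿ × ℝ : x ∈ X, −‖x‖_p ≤ t} of the reverse ℓ_p-norm function restricted to X is not MICP-representable. -/
open MeasureTheory

noncomputable def lpF (p : ℝ) {n : ℕ} (x : Fin n → ℝ) : ℝ := ∑ i, |x i| ^ p

noncomputable def lpN (p : ℝ) {n : ℕ} (x : Fin n → ℝ) : ℝ := lpF p x ^ (1 / p)

lemma lpF_nonneg (p : ℝ) {n : ℕ} (x : Fin n → ℝ) : 0 ≤ lpF p x :=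
  Finset.sum_nonneg fun i _ => Real.rpow_nonneg (abs_nonneg _) _

lemma lpF_pos (p : ℝ) {n : ℕ} {x : Fin n → ℝ} (hx : x ≠ 0) : 0 < lpF p x := by
  obtain ⟨i, hi⟩ := Function.ne_iff.1 hx
  exact Finset.sum_pos' (fun j _ => Real.rpow_nonneg (abs_nonneg _) _)
    ⟨i, Finset.mem_univ i, Real.rpow_pos_of_pos (abs_pos.2 hi) _⟩

lemma lpN_pos {p : ℝ} {n : ℕ} {x : Fin n → ℝ} (hx : x ≠ 0) : 0 < lpN p x :=
  Real.rpow_pos_of_pos (lpF_pos p hx) _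

lemma lpN_rpow {p : ℝ} (hp : 1 < p) {n : ℕ} (x : Fin n → ℝ) :
    lpN p x ^ p = lpF p x := by
  have hp0 : p ≠ 0 := by positivity
  rw [lpN, ← Real.rpow_mul (lpF_nonneg _ _), one_div, inv_mul_cancel₀ hp0, Real.rpow_one]

lemma lpF_smul {p : ℝ} (hp : 1 < p) {n : ℕ} {c : ℝ} (hc : 0 ≤ c) (x : Fin n → ℝ) :
    lpF p (c • x) = c ^ p * lpF p x := by
  unfold lpF
  rw [Finset.mul_sum]
  refine Finset.sum_congr rfl fun i _ => ?_
  rw [Pi.smul_apply, smul_eq_mul, abs_mul, abs_of_nonneg hc,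
    Real.mul_rpow hc (abs_nonneg _)]

lemma lpN_smul {p : ℝ} (hp : 1 < p) {n : ℕ} {c : ℝ} (hc : 0 ≤ c) (x : Fin n → ℝ) :
    lpN p (c • x) = c * lpN p x := by
  have hp0 : p ≠ 0 := by positivity
  rw [lpN, lpF_smul hp hc, Real.mul_rpow (Real.rpow_nonneg hc _) (lpF_nonneg _ _),
    ← Real.rpow_mul hc, mul_one_div_cancel hp0, Real.rpow_one, lpN]

lemma aux_abs_rpow_le {p a b s t : ℝ} (hp : 1 < p) (ha : 0 < a) (hb : 0 < b)
    (hab : a + b = 1) : |a * s + b * t| ^ p ≤ a * |s| ^ p + b * |t| ^ p := by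
  have h1 : |a * s + b * t| ≤ a * |s| + b * |t| := by
    calc |a * s + b * t| ≤ |a * s| + |b * t| := abs_add_le _ _
    _ = a * |s| + b * |t| := by rw [abs_mul, abs_mul, abs_of_pos ha, abs_of_pos hb]
  have h2 := (convexOn_rpow hp.le).2 (Set.mem_Ici.2 (abs_nonneg s))
    (Set.mem_Ici.2 (abs_nonneg t)) ha.le hb.le hab
  calc |a * s + b * t| ^ p ≤ (a * |s| + b * |t|) ^ p :=
        Real.rpow_le_rpow (abs_nonneg _) h1 (by positivity)
    _ ≤ a * |s| ^ p + b * |t| ^ p := by simpa using h2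

lemma aux_abs_rpow_lt {p a b s t : ℝ} (hp : 1 < p) (ha : 0 < a) (hb : 0 < b)
    (hab : a + b = 1) (hst : s ≠ t) :
    |a * s + b * t| ^ p < a * |s| ^ p + b * |t| ^ p := by
  rcases eq_or_ne |s| |t| with habs | habs
  · have hs0 : s ≠ 0 := by
      rintro rfl
      exact hst (abs_eq_zero.mp (by simpa using habs.symm)).symm
    have hts : t = -s := by
      rcases abs_eq_abs.1 habs with h | h
      · exact absurd h hst
      · linarith
    subst hts
    have key : |a * s + b * -s| < |s| := by
      have he : a * s + b * -s = (a - b) * s := by ring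
      rw [he, abs_mul]
      have hlt : |a - b| < 1 := by
        rw [abs_lt]; constructor <;> linarith
      calc |a - b| * |s| < 1 * |s| := mul_lt_mul_of_pos_right hlt (abs_pos.2 hs0)
        _ = |s| := one_mul _
    have h2 : |a * s + b * -s| ^ p < |s| ^ p :=
      Real.rpow_lt_rpow (abs_nonneg _) key (by positivity)
    calc |a * s + b * -s| ^ p < |s| ^ p := h2
      _ = a * |s| ^ p + b * |(-s)| ^ p := by rw [abs_neg]; nlinarith [Real.rpow_nonneg (abs_nonneg s) p]
  · have h2 := (strictConvexOn_rpow hp).2 (Set.mem_Ici.2 (abs_nonneg s))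
      (Set.mem_Ici.2 (abs_nonneg t)) habs ha hb hab
    have h1 : |a * s + b * t| ≤ a * |s| + b * |t| := by
      calc |a * s + b * t| ≤ |a * s| + |b * t| := abs_add_le _ _
      _ = a * |s| + b * |t| := by rw [abs_mul, abs_mul, abs_of_pos ha, abs_of_pos hb]
    calc |a * s + b * t| ^ p ≤ (a * |s| + b * |t|) ^ p :=
          Real.rpow_le_rpow (abs_nonneg _) h1 (by positivity)
      _ < a * |s| ^ p + b * |t| ^ p := by simpa using h2

lemma lpF_strict {p : ℝ} (hp : 1 < p) {n : ℕ} {u v : Fin n → ℝ} (huv : u ≠ v)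
    {a b : ℝ} (ha : 0 < a) (hb : 0 < b) (hab : a + b = 1) :
    lpF p (a • u + b • v) < a * lpF p u + b * lpF p v := by
  obtain ⟨i₀, hi₀⟩ := Function.ne_iff.1 huv
  unfold lpF
  rw [Finset.mul_sum, Finset.mul_sum, ← Finset.sum_add_distrib]
  refine Finset.sum_lt_sum (fun i _ => ?_) ⟨i₀, Finset.mem_univ _, ?_⟩
  · simpa using aux_abs_rpow_le hp ha hb hab (s := u i) (t := v i)
  · simpa using aux_abs_rpow_lt hp ha hb hab hi₀

lemma lp_colinear {p : ℝ} (hp : 1 < p) {n : ℕ} {x₁ x₂ : Fin n → ℝ}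
    (h1 : x₁ ≠ 0) (h2 : x₂ ≠ 0)
    (h : lpN p x₁ + lpN p x₂ ≤ lpN p (x₁ + x₂)) : ∃ c : ℝ, x₂ = c • x₁ := by
  have hN₁ : 0 < lpN p x₁ := lpN_pos h1
  have hN₂ : 0 < lpN p x₂ := lpN_pos h2
  set N₁ := lpN p x₁ with hN₁def
  set N₂ := lpN p x₂ with hN₂def
  by_cases huv : (N₁⁻¹ • x₁ : Fin n → ℝ) = N₂⁻¹ • x₂
  · refine ⟨N₂ * N₁⁻¹, ?_⟩
    have : N₂ • (N₂⁻¹ • x₂) = N₂ • (N₁⁻¹ • x₁) := by rw [huv]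
    rw [smul_smul, mul_inv_cancel₀ hN₂.ne', one_smul] at this
    rw [this, smul_smul]
  · exfalso
    have hsum : 0 < N₁ + N₂ := by linarith
    set a := N₁ / (N₁ + N₂) with hadef
    set b := N₂ / (N₁ + N₂) with hbdef
    have hab : a + b = 1 := by
      rw [hadef, hbdef, ← add_div, div_self hsum.ne']
    have ha : 0 < a := div_pos hN₁ hsum
    have hb : 0 < b := div_pos hN₂ hsum
    have e1 : a * N₁⁻¹ = (N₁ + N₂)⁻¹ := by
      rw [hadef, div_mul_eq_mul_div, mul_inv_cancel₀ hN₁.ne', one_div]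
    have e2 : b * N₂⁻¹ = (N₁ + N₂)⁻¹ := by
      rw [hbdef, div_mul_eq_mul_div, mul_inv_cancel₀ hN₂.ne', one_div]
    have hkey : a • (N₁⁻¹ • x₁) + b • (N₂⁻¹ • x₂) = (N₁ + N₂)⁻¹ • (x₁ + x₂) := by
      rw [smul_smul, smul_smul, e1, e2, smul_add]
    have h3 : (1 : ℝ) ≤ lpN p (a • (N₁⁻¹ • x₁) + b • (N₂⁻¹ • x₂)) := by
      rw [hkey, lpN_smul hp (inv_nonneg.2 hsum.le)]
      rw [show (1 : ℝ) = (N₁ + N₂)⁻¹ * (N₁ + N₂) by field_simp]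
      exact mul_le_mul_of_nonneg_left h (inv_nonneg.2 hsum.le)
    have h4 : (1 : ℝ) ≤ lpF p (a • (N₁⁻¹ • x₁) + b • (N₂⁻¹ • x₂)) := by
      rw [← lpN_rpow hp]
      calc (1 : ℝ) = 1 ^ p := (Real.one_rpow p).symm
        _ ≤ _ := Real.rpow_le_rpow one_pos.le h3 (by positivity)
    have h5 : lpF p (N₁⁻¹ • x₁) = 1 := by
      rw [← lpN_rpow hp, lpN_smul hp (inv_nonneg.2 hN₁.le), ← hN₁def,
        inv_mul_cancel₀ hN₁.ne', Real.one_rpow]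
    have h6 : lpF p (N₂⁻¹ • x₂) = 1 := by
      rw [← lpN_rpow hp, lpN_smul hp (inv_nonneg.2 hN₂.le), ← hN₂def,
        inv_mul_cancel₀ hN₂.ne', Real.one_rpow]
    have h7 := lpF_strict hp huv ha hb hab
    rw [h5, h6] at h7
    nlinarith

/-- For `n ≥ 2`, `p ∈ (1, ∞)`, and a compact convex `X ⊆ ℝⁿ` with nonempty interior,
the epigraph `{(x, t) : x ∈ X, −‖x‖_p ≤ t}` of the reverse `ℓ_p`-norm function
restricted to `X` is not MICP-representable.  Here `‖x‖_p = (∑ i, |x i| ^ p) ^ (1/p)`. -/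
theorem epigraph_neg_lp_not_micpr {n : ℕ} (hn : 2 ≤ n) (p : ℝ) (hp : 1 < p)
    (X : Set (Fin n → ℝ)) (hcomp : IsCompact X) (hconv : Convex ℝ X)
    (hint : (interior X).Nonempty) :
    ¬ IsMICPR {xt : (Fin n → ℝ) × ℝ | xt.1 ∈ X ∧
        -((∑ i, |xt.1 i| ^ p) ^ (1 / p)) ≤ xt.2} := by
  rintro ⟨q, d, M, -, hMconv, hiff⟩
  classical
  have hiff' : ∀ xt : (Fin n → ℝ) × ℝ, (xt.1 ∈ X ∧ -lpN p xt.1 ≤ xt.2) ↔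
      ∃ (y : Fin q → ℝ) (z : Fin d → ℝ),
        (∀ i, ∃ k : ℤ, z i = (k : ℝ)) ∧ (xt, y, z) ∈ M := fun xt => hiff xt
  set A : (Fin d → ℤ) → Set (Fin n → ℝ) := fun z =>
    {x | x ∈ X ∧ ∃ y : Fin q → ℝ,
      ((x, -lpN p x), y, fun i => ((z i : ℤ) : ℝ)) ∈ M} with hA
  -- covering
  have hcover : ∀ x ∈ X, ∃ z : Fin d → ℤ, x ∈ A z := by
    intro x hx
    obtain ⟨y, z, hz, hM⟩ := (hiff' (x, -lpN p x)).1 ⟨hx, le_rfl⟩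
    choose k hk using hz
    refine ⟨k, hx, y, ?_⟩
    have hzk : (fun i => ((k i : ℤ) : ℝ)) = z := funext fun i => (hk i).symm
    rw [hzk]; exact hM
  -- each A z is contained in a line through the origin
  have hline : ∀ z, ∃ L : Submodule ℝ (Fin n → ℝ), L ≠ ⊤ ∧ A z ⊆ L := by
    intro z
    have hkey : ∀ x₁ ∈ A z, ∀ x₂ ∈ A z, x₁ ≠ 0 → x₂ ≠ 0 → ∃ c : ℝ, x₂ = c • x₁ := by
      rintro x₁ ⟨hx₁X, y₁, hm₁⟩ x₂ ⟨hx₂X, y₂, hm₂⟩ h1 h2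
      have hmid := hMconv hm₁ hm₂ (by norm_num : (0:ℝ) ≤ 1/2)
        (by norm_num : (0:ℝ) ≤ 1/2) (by norm_num)
      have hz2 : ((1:ℝ)/2) • (fun i => ((z i : ℤ) : ℝ)) +
          ((1:ℝ)/2) • (fun i => ((z i : ℤ) : ℝ)) = (fun i => ((z i : ℤ) : ℝ)) := by
        funext i
        simp only [Pi.add_apply, Pi.smul_apply, smul_eq_mul]
        ring
      simp only [Prod.smul_mk, Prod.mk_add_mk, smul_eq_mul, hz2] at hmid
      have hmid' := hmid
      have hmemS := (hiff' _).2 ⟨((1:ℝ)/2) • y₁ + ((1:ℝ)/2) • y₂,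
        fun i => ((z i : ℤ) : ℝ), fun i => ⟨z i, rfl⟩, hmid'⟩
      obtain ⟨-, hle⟩ := hmemS
      have hmrw : ((1:ℝ)/2) • x₁ + ((1:ℝ)/2) • x₂ = ((1:ℝ)/2) • (x₁ + x₂) := by
        rw [smul_add]
      rw [hmrw, lpN_smul hp (by norm_num : (0:ℝ) ≤ 1/2)] at hle
      refine lp_colinear hp h1 h2 ?_
      linarith
    by_cases hAz : ∃ v ∈ A z, v ≠ 0
    · obtain ⟨v, hvA, hv0⟩ := hAz
      refine ⟨Submodule.span ℝ {v}, ?_, ?_⟩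
      · intro htop
        have hfr : Module.finrank ℝ (Submodule.span ℝ ({v} : Set (Fin n → ℝ))) = 1 :=
          finrank_span_singleton hv0
        rw [htop, finrank_top] at hfr
        have : Module.finrank ℝ (Fin n → ℝ) = n := Module.finrank_fin_fun ℝ
        omega
      · intro x hx
        rcases eq_or_ne x 0 with rfl | hx0
        · exact Submodule.zero_mem _
        · obtain ⟨c, hc⟩ := hkey v hvA x hx hv0 hx0
          rw [hc]
          exact Submodule.smul_mem _ _ (Submodule.mem_span_singleton_self v)
    · push_neg at hAz
      haveI : Nonempty (Fin n) := ⟨⟨0, by omega⟩⟩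
      refine ⟨⊥, bot_ne_top, fun x hx => ?_⟩
      simp [hAz x hx]
  choose L hLne hLsub using hline
  -- measure-theoretic contradiction
  obtain ⟨x₀, hx₀⟩ := hint
  obtain ⟨r, hr, hball⟩ := Metric.isOpen_iff.1 isOpen_interior x₀ hx₀
  have hsub : Metric.ball x₀ r ⊆ ⋃ z, (L z : Set (Fin n → ℝ)) := by
    intro x hx
    obtain ⟨z, hz⟩ := hcover x (interior_subset (hball hx))
    exact Set.mem_iUnion.2 ⟨z, hLsub z hz⟩
  have h0 : volume (⋃ z, (L z : Set (Fin n → ℝ))) = 0 :=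
    measure_iUnion_null fun z => Measure.addHaar_submodule _ _ (hLne z)
  exact absurd (measure_mono_null hsub h0) (Metric.measure_ball_pos volume x₀ hr).ne'
end

section
/- Let X ⊆ ℝⁿ be a nonempty compact convex set. Then the epigraph {(x, t) ∈ ℝⁿ × ℝ : x ∈ X, −‖x‖_∞ ≤ t} of the reverse ℓ_∞-norm function restricted to X is MICP-representable. -/
open Finset

theorem IsMICPR.of_fintype {E : Type*} [AddCommGroup E] [Module ℝ E] [TopologicalSpace E]
    {S : Set E} {p : ℕ} {ι : Type*} [Fintype ι] (M : Set (E × (Fin p → ℝ) × (ι → ℝ)))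
    (hclosed : IsClosed M) (hconvex : Convex ℝ M)
    (hS : ∀ x, x ∈ S ↔ ∃ (y : Fin p → ℝ) (z : ι → ℝ), (∀ i, ∃ k : ℤ, z i = k) ∧ (x, y, z) ∈ M) :
    IsMICPR S := by
  let e := Fintype.equivFin ι
  let L := LinearMap.prodMap (LinearMap.id : E →ₗ[ℝ] E)
    (LinearMap.prodMap (LinearMap.id : (Fin p → ℝ) →ₗ[ℝ] _) (LinearMap.funLeft ℝ ℝ e))
  refine ⟨p, Fintype.card ι, L ⁻¹' M, hclosed.preimage ?_, hconvex.linear_preimage L, ?_⟩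
  · change Continuous fun w : E × (Fin p → ℝ) × (Fin _ → ℝ) => (w.1, w.2.1, w.2.2 ∘ e)
    fun_prop
  intro x
  rw [hS]
  constructor
  · rintro ⟨y, z, hz, hmem⟩
    refine ⟨y, z ∘ e.symm, fun i => hz _, ?_⟩
    simpa [L, LinearMap.funLeft, Function.comp_def] using hmem
  · rintro ⟨y, z, hz, hmem⟩
    exact ⟨y, z ∘ e, fun i => hz _, hmem⟩

theorem exists_one_le_of_sum_eq_one {ι : Type*} [Fintype ι] {z : ι → ℝ}
    (hint : ∀ j, ∃ k : ℤ, z j = k) (hnonneg : ∀ j, 0 ≤ z j) (hsum : ∑ j, z j = 1) :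
    ∃ j, 1 ≤ z j := by
  by_contra! hlt
  have hzero : ∀ j, z j = 0 := fun j => by
    obtain ⟨k, hk⟩ := hint j
    have h₀ : 0 ≤ k := by exact_mod_cast hk ▸ hnonneg j
    have h₁ : k < 1 := by exact_mod_cast hk ▸ hlt j
    rw [hk, show k = 0 by omega, Int.cast_zero]
  simp [hzero] at hsum

section BigM

variable {E ι : Type*} [Fintype ι]

def bigMFormulation (X : Set E) (f : ι → E → ℝ) (M : ℝ) :
    Set ((E × ℝ) × (Fin 0 → ℝ) × (ι → ℝ)) :=
  {w | w.1.1 ∈ X ∧ (∀ j, 0 ≤ w.2.2 j) ∧ ∑ j, w.2.2 j = 1 ∧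
    ∀ j, f j w.1.1 ≤ w.1.2 + M * (1 - w.2.2 j)}

theorem isClosed_bigMFormulation [TopologicalSpace E] {X : Set E} (hX : IsClosed X)
    {f : ι → E → ℝ} (hf : ∀ j, Continuous (f j)) (M : ℝ) : IsClosed (bigMFormulation X f M) := by
  simp only [bigMFormulation, Set.ofPred_and, Set.ofPred_forall]
  refine (hX.preimage ?_).inter <| (isClosed_iInter fun j => isClosed_le ?_ ?_).inter <|
    (isClosed_eq ?_ ?_).inter <| isClosed_iInter fun j => isClosed_le ((hf j).comp ?_) ?_
  all_goals fun_prop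

theorem convex_bigMFormulation [AddCommGroup E] [Module ℝ E] {X : Set E} (hX : Convex ℝ X)
    {f : ι → E → ℝ} (hf : ∀ j, ConvexOn ℝ X (f j)) (M : ℝ) : Convex ℝ (bigMFormulation X f M) := by
  rintro ⟨⟨x₁, t₁⟩, y₁, z₁⟩ ⟨hx₁, hz₁, hs₁, hc₁⟩ ⟨⟨x₂, t₂⟩, y₂, z₂⟩ ⟨hx₂, hz₂, hs₂, hc₂⟩
    a b ha hb hab
  simp only [bigMFormulation, Set.mem_ofPred_eq, Prod.fst_add, Prod.snd_add, Prod.smul_fst,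
    Prod.smul_snd, Pi.add_apply, Pi.smul_apply, smul_eq_mul]
  refine ⟨hX hx₁ hx₂ ha hb hab, fun j => by have := hz₁ j; have := hz₂ j; positivity, ?_,
    fun j => ?_⟩
  · rw [sum_add_distrib, ← mul_sum, ← mul_sum, hs₁, hs₂]
    linarith
  · calc f j (a • x₁ + b • x₂) ≤ a * f j x₁ + b * f j x₂ := (hf j).2 hx₁ hx₂ ha hb hab
      _ ≤ a * (t₁ + M * (1 - z₁ j)) + b * (t₂ + M * (1 - z₂ j)) := by
        gcongr
        · exact hc₁ j
        · exact hc₂ j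
      _ = a * t₁ + b * t₂ + M * (1 - (a * z₁ j + b * z₂ j)) := by
        linear_combination M * hab

theorem mem_bigMFormulation_iff {X : Set E} {f : ι → E → ℝ} {M : ℝ}
    (hM : ∀ x ∈ X, ∀ j k, f j x ≤ f k x + M) (x : E) (t : ℝ) :
    (x ∈ X ∧ ∃ j, f j x ≤ t) ↔ ∃ (y : Fin 0 → ℝ) (z : ι → ℝ),
      (∀ j, ∃ k : ℤ, z j = k) ∧ ((x, t), y, z) ∈ bigMFormulation X f M := by
  classical
  constructor
  · rintro ⟨hx, j₀, hj₀⟩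
    refine ⟨0, Pi.single j₀ 1, fun j => ?_, hx, fun j => ?_, by simp, fun j => ?_⟩
    · rcases eq_or_ne j j₀ with rfl | hj
      · exact ⟨1, by simp⟩
      · exact ⟨0, by simp [hj]⟩
    · rcases eq_or_ne j j₀ with rfl | hj <;> simp [*]
    · rcases eq_or_ne j j₀ with rfl | hj
      · simpa using hj₀
      · simpa [hj] using (hM x hx j j₀).trans (by linarith)
  · rintro ⟨y, z, hint, hx, hnonneg, hsum, hc⟩
    obtain ⟨j, hj⟩ := exists_one_le_of_sum_eq_one hint hnonneg hsum
    have hM₀ : 0 ≤ M := by simpa using hM x hx j j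
    have hslack : M * (1 - z j) ≤ 0 := mul_nonpos_of_nonneg_of_nonpos hM₀ (by linarith)
    exact ⟨hx, j, (hc j).trans (by linarith)⟩

theorem isMICPR_of_bigM [AddCommGroup E] [Module ℝ E] [TopologicalSpace E] {X : Set E}
    (hXc : IsClosed X) (hXv : Convex ℝ X) {f : ι → E → ℝ} (hcont : ∀ j, Continuous (f j))
    (hconv : ∀ j, ConvexOn ℝ X (f j)) {M : ℝ}
    (hM : ∀ x ∈ X, ∀ j k, f j x ≤ f k x + M) :
    IsMICPR {xt : E × ℝ | xt.1 ∈ X ∧ ∃ j, f j xt.1 ≤ xt.2} :=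
  .of_fintype _ (isClosed_bigMFormulation hXc hcont M) (convex_bigMFormulation hXv hconv M)
    fun xt => mem_bigMFormulation_iff hM xt.1 xt.2

end BigM

section NegLinf

variable {ι : Type*}

def negLinfPiece : Option (ι × Bool) → (ι → ℝ) →L[ℝ] ℝ
  | none => 0
  | some (i, b) => if b then -ContinuousLinearMap.proj i else ContinuousLinearMap.proj i

theorem abs_negLinfPiece_some (i : ι) (b : Bool) (x : ι → ℝ) :
    |negLinfPiece (some (i, b)) x| = |x i| := by
  cases b <;> simp [negLinfPiece]

variable [Fintype ι]

theorem abs_negLinfPiece_le_norm (j : Option (ι × Bool)) (x : ι → ℝ) :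
    |negLinfPiece j x| ≤ ‖x‖ := by
  rcases j with _ | ⟨i, b⟩
  · simp [negLinfPiece]
  · rw [abs_negLinfPiece_some]
    exact norm_le_pi_norm x i

theorem neg_iSup_abs_le_negLinfPiece (j : Option (ι × Bool)) (x : ι → ℝ) :
    -(⨆ i, |x i|) ≤ negLinfPiece j x := by
  rcases j with _ | ⟨i, b⟩
  · simpa [negLinfPiece] using Real.iSup_nonneg fun i => abs_nonneg (x i)
  · calc -(⨆ i, |x i|) ≤ -|x i| :=
        neg_le_neg (le_ciSup (f := fun i => |x i|) (Set.finite_range _).bddAbove i)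
      _ = -|negLinfPiece (some (i, b)) x| := by rw [abs_negLinfPiece_some]
      _ ≤ negLinfPiece (some (i, b)) x := neg_abs_le _

theorem exists_negLinfPiece_eq_neg_iSup_abs (x : ι → ℝ) :
    ∃ j, negLinfPiece j x = -(⨆ i, |x i|) := by
  cases isEmpty_or_nonempty ι with
  | inl _ => exact ⟨none, by simp [negLinfPiece]⟩
  | inr _ =>
    obtain ⟨i, hi⟩ := exists_eq_ciSup_of_finite (f := fun i => |x i|)
    refine ⟨some (i, decide (0 ≤ x i)), ?_⟩
    rw [← hi]
    by_cases hxi : 0 ≤ x i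
    · simp [negLinfPiece, hxi, abs_of_nonneg hxi]
    · simp [negLinfPiece, hxi, abs_of_neg (not_le.1 hxi)]

theorem neg_iSup_abs_le_iff (x : ι → ℝ) (t : ℝ) :
    -(⨆ i, |x i|) ≤ t ↔ ∃ j, negLinfPiece j x ≤ t := by
  refine ⟨fun h => ?_, fun ⟨j, hj⟩ => (neg_iSup_abs_le_negLinfPiece j x).trans hj⟩
  obtain ⟨j, hj⟩ := exists_negLinfPiece_eq_neg_iSup_abs x
  exact ⟨j, hj ▸ h⟩

end NegLinf

theorem epigraph_neg_linf_micpr_general {n : ℕ} (X : Set (Fin n → ℝ))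
    (hcomp : IsCompact X) (hconv : Convex ℝ X) :
    IsMICPR {xt : (Fin n → ℝ) × ℝ | xt.1 ∈ X ∧ -(⨆ i, |xt.1 i|) ≤ xt.2} := by
  obtain ⟨B, hB⟩ := hcomp.isBounded.exists_norm_le
  have hM : ∀ x ∈ X, ∀ j k, negLinfPiece j x ≤ negLinfPiece k x + 2 * B := fun x hx j k => by
    have hj := abs_le.1 ((abs_negLinfPiece_le_norm j x).trans (hB x hx))
    have hk := abs_le.1 ((abs_negLinfPiece_le_norm k x).trans (hB x hx))
    linarith [hj.2, hk.1]
  simp_rw [neg_iSup_abs_le_iff]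
  exact isMICPR_of_bigM hcomp.isClosed hconv (fun j => (negLinfPiece j).continuous)
    (fun j => (negLinfPiece j).toLinearMap.convexOn hconv) hM

/-- For a nonempty compact convex `X ⊆ ℝⁿ`, the epigraph
`{(x, t) : x ∈ X, −‖x‖_∞ ≤ t}` of the reverse `ℓ_∞`-norm function restricted to `X`
is MICP-representable.  Here `‖x‖_∞ = ⨆ i, |x i|` is the maximum of the `|x i|`. -/
theorem epigraph_neg_linf_micpr {n : ℕ} (X : Set (Fin n → ℝ)) (hne : X.Nonempty)
    (hcomp : IsCompact X) (hconv : Convex ℝ X) :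
    IsMICPR {xt : (Fin n → ℝ) × ℝ | xt.1 ∈ X ∧ -(⨆ i, |xt.1 i|) ≤ xt.2} :=
  epigraph_neg_linf_micpr_general X hcomp hconv
end

section
/- Let N be a positive integer and let w₁, …, w_N be nonnegative integers. Consider the minimization problem v* = min { Σ_{i∈[N]} ξᵢ yᵢ : ξ ∈ [−1,1]^N, y ∈ [−1,1]^N, Σ_{i∈[N]} wᵢ yᵢ = 0 } (the feasible set is nonempty and compact, so the minimum is attained). Then v* = −N if and only if there exists a subset S ⊆ [N] such that Σ_{i∈S} wᵢ = Σ_{i∈[N]∖S} wᵢ. -/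
/-!
For `ξᵢ, yᵢ ∈ [−1, 1]` every product `ξᵢ yᵢ` is at least `−1`, so every feasible value is at
least `−N`, and `−N` is attained exactly when `ξᵢ yᵢ = −1` for all `i`, which forces `y` to be a
sign vector and `ξ = −y`. A sign vector `y` satisfies `∑ wᵢ yᵢ = 0` precisely when the set where
`y = 1` splits the weights into two halves of equal sum. The feasible values form a compact set,
so the infimum is attained and equals `−N` exactly when `−N` is a feasible value.
-/

open Finset Set

variable {ι : Type*} [Fintype ι]

def boxBilinearValues (w : ι → ℝ) : Set ℝ :=
  {v | ∃ ξ y : ι → ℝ, (∀ i, ξ i ∈ Icc (-1 : ℝ) 1) ∧ (∀ i, y i ∈ Icc (-1 : ℝ) 1) ∧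
    (∑ i, w i * y i) = 0 ∧ v = ∑ i, ξ i * y i}

lemma neg_one_le_mul_of_mem_Icc {a b : ℝ} (ha : a ∈ Icc (-1 : ℝ) 1) (hb : b ∈ Icc (-1 : ℝ) 1) :
    -1 ≤ a * b := by
  nlinarith [ha.1, ha.2, hb.1, hb.2]

lemma eq_ite_pos_of_mul_eq_neg_one {a b : ℝ} (ha : a ∈ Icc (-1 : ℝ) 1)
    (hb : b ∈ Icc (-1 : ℝ) 1) (hab : a * b = -1) : b = if 0 < b then 1 else -1 := by
  split_ifs with hpos <;> nlinarith [ha.1, ha.2, hb.1, hb.2]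

lemma sum_mul_ite_mem [DecidableEq ι] (w : ι → ℝ) (S : Finset ι) :
    ∑ i, w i * (if i ∈ S then 1 else -1) = ∑ i ∈ S, w i - ∑ i ∈ Sᶜ, w i := by
  rw [← sum_add_sum_compl S, sub_eq_add_neg, ← sum_neg_distrib]
  congr 1 <;> refine sum_congr rfl fun i hi => ?_
  · simp [hi]
  · simp [mem_compl.mp hi]

lemma zero_mem_boxBilinearValues (w : ι → ℝ) : (0 : ℝ) ∈ boxBilinearValues w :=
  ⟨0, 0, by simp, by simp, by simp, by simp⟩

lemma neg_card_le_of_mem_boxBilinearValues {w : ι → ℝ} {v : ℝ} (hv : v ∈ boxBilinearValues w) :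
    -(Fintype.card ι : ℝ) ≤ v := by
  obtain ⟨ξ, y, hξ, hy, -, rfl⟩ := hv
  calc -(Fintype.card ι : ℝ) = ∑ _i : ι, (-1 : ℝ) := by simp
    _ ≤ ∑ i, ξ i * y i := sum_le_sum fun i _ => neg_one_le_mul_of_mem_Icc (hξ i) (hy i)

lemma isCompact_boxBilinearValues (w : ι → ℝ) : IsCompact (boxBilinearValues w) := by
  have hbox : IsCompact (univ.pi fun _ : ι => Icc (-1 : ℝ) 1) :=
    isCompact_univ_pi fun _ => isCompact_Icc
  have hfeasible := hbox.prod <| hbox.inter_right <|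
    isClosed_eq (f := fun y : ι → ℝ => ∑ i, w i * y i) (g := fun _ => 0) (by fun_prop)
      continuous_const
  convert hfeasible.image (f := fun p : (ι → ℝ) × (ι → ℝ) => ∑ i, p.1 i * p.2 i) (by fun_prop)
  ext v
  constructor
  · rintro ⟨ξ, y, hξ, hy, hw, rfl⟩
    exact ⟨(ξ, y), ⟨fun i _ => hξ i, fun i _ => hy i, hw⟩, rfl⟩
  · rintro ⟨⟨ξ, y⟩, ⟨hξ, hy, hw⟩, rfl⟩
    exact ⟨ξ, y, fun i => hξ i trivial, fun i => hy i trivial, hw, rfl⟩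

lemma sInf_boxBilinearValues_eq_neg_card_iff (w : ι → ℝ) :
    sInf (boxBilinearValues w) = -(Fintype.card ι : ℝ) ↔
      -(Fintype.card ι : ℝ) ∈ boxBilinearValues w := by
  refine ⟨fun h => h ▸ ?_, fun h => IsLeast.csInf_eq ⟨h, fun _ =>
    neg_card_le_of_mem_boxBilinearValues⟩⟩
  exact (isCompact_boxBilinearValues w).sInf_mem ⟨0, zero_mem_boxBilinearValues w⟩

lemma neg_card_mem_boxBilinearValues_iff [DecidableEq ι] (w : ι → ℝ) :
    -(Fintype.card ι : ℝ) ∈ boxBilinearValues w ↔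
      ∃ S : Finset ι, ∑ i ∈ S, w i = ∑ i ∈ Sᶜ, w i := by
  constructor
  · rintro ⟨ξ, y, hξ, hy, hw, hv⟩
    have hprod : ∀ i, ξ i * y i = -1 := by
      have hsum : ∑ _i : ι, (-1 : ℝ) = ∑ i, ξ i * y i := by simpa using hv
      exact fun i => ((sum_eq_sum_iff_of_le fun i _ =>
        neg_one_le_mul_of_mem_Icc (hξ i) (hy i)).1 hsum i (mem_univ i)).symm
    set S := univ.filter fun i => 0 < y i
    have hy_sign : y = fun i => if i ∈ S then 1 else -1 := funext fun i => by
      simpa [S] using eq_ite_pos_of_mul_eq_neg_one (hξ i) (hy i) (hprod i)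
    refine ⟨S, ?_⟩
    rw [hy_sign, sum_mul_ite_mem] at hw
    linarith
  · rintro ⟨S, hS⟩
    have hsign : ∀ i, (if i ∈ S then 1 else -1 : ℝ) ∈ Icc (-1 : ℝ) 1 := fun i => by
      split_ifs <;> norm_num
    refine ⟨fun i => -(if i ∈ S then 1 else -1), fun i => if i ∈ S then 1 else -1,
      fun i => by dsimp only; split_ifs <;> norm_num, hsign,
      by rw [sum_mul_ite_mem, hS, sub_self], ?_⟩
    have hterm : ∀ i, -(if i ∈ S then 1 else -1 : ℝ) * (if i ∈ S then 1 else -1) = -1 :=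
      fun i => by split_ifs <;> norm_num
    simp [hterm]

theorem partition_reduction_general {N : ℕ} (w : Fin N → ℕ) :
    sInf {v : ℝ | ∃ ξ y : Fin N → ℝ,
        (∀ i, ξ i ∈ Set.Icc (-1 : ℝ) 1) ∧ (∀ i, y i ∈ Set.Icc (-1 : ℝ) 1) ∧
        (∑ i, (w i : ℝ) * y i) = 0 ∧ v = ∑ i, ξ i * y i} = -(N : ℝ) ↔
      ∃ S : Finset (Fin N), (∑ i ∈ S, w i) = ∑ i ∈ Sᶜ, w i := by
  have h := (sInf_boxBilinearValues_eq_neg_card_iff fun i => (w i : ℝ)).trans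
    (neg_card_mem_boxBilinearValues_iff _)
  rw [Fintype.card_fin] at h
  simp only [← Nat.cast_sum, Nat.cast_inj] at h
  exact h

/-- The optimal value of
`min { ∑ ξᵢ yᵢ : ξ ∈ [−1,1]^N, y ∈ [−1,1]^N, ∑ wᵢ yᵢ = 0 }` equals `−N` if and only
if there is a subset `S ⊆ [N]` with `∑_{i∈S} wᵢ = ∑_{i∉S} wᵢ` (set partition). -/
theorem partition_reduction {N : ℕ} (hN : 0 < N) (w : Fin N → ℕ) :
    sInf {v : ℝ | ∃ ξ y : Fin N → ℝ,
        (∀ i, ξ i ∈ Set.Icc (-1 : ℝ) 1) ∧ (∀ i, y i ∈ Set.Icc (-1 : ℝ) 1) ∧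
        (∑ i, (w i : ℝ) * y i) = 0 ∧ v = ∑ i, ξ i * y i} = -(N : ℝ) ↔
      ∃ S : Finset (Fin N), (∑ i ∈ S, w i) = ∑ i ∈ Sᶜ, w i :=
  partition_reduction_general w
end

section
/- Let X ⊆ ℝⁿ be a nonempty compact set, K and m positive integers, and for each k ∈ [K] let a_k(x) = Â_k x + â_k ∈ ℝ^m and b_k(x) = B̂_kᵀ x + b̂_k ∈ ℝ be affine maps. Let ξ⁰ ∈ ℝ^m, θ ≥ 0, let p ∈ [1, ∞], and let q be the Hölder conjugate of p (1/p + 1/q = 1, with q = ∞ when p = 1 and q = 1 when p = ∞). Then min_{x∈X} min_{ξ : ‖ξ−ξ⁰‖_p ≤ θ} min_{k∈[K]} ( ξᵀ a_k(x) + b_k(x) ) = min_{k∈[K]} min_{x∈X} ( (ξ⁰)ᵀ a_k(x) + b_k(x) − θ ‖a_k(x)‖_q ), and all minima are attained. -/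
open scoped ENNReal

/-- The `ℓ_p` norm of a vector in `ℝ^m`, for `p ∈ [1, ∞]` (`p : ℝ≥0∞`). -/
noncomputable def pnorm (p : ℝ≥0∞) [Fact (1 ≤ p)] {m : ℕ} (v : Fin m → ℝ) : ℝ :=
  ‖(WithLp.equiv p (Fin m → ℝ)).symm v‖

private lemma pnorm_nonneg {m : ℕ} (p : ℝ≥0∞) [Fact (1 ≤ p)] (v : Fin m → ℝ) :
    0 ≤ pnorm p v := norm_nonneg _

private lemma pnorm_smul {m : ℕ} (p : ℝ≥0∞) [Fact (1 ≤ p)] (c : ℝ) (v : Fin m → ℝ) :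
    pnorm p (c • v) = |c| * pnorm p v := by
  rw [pnorm, pnorm, WithLp.equiv_symm_apply, WithLp.toLp_smul, norm_smul, Real.norm_eq_abs]

private lemma pnorm_eq_sum' {m : ℕ} {q : ℝ≥0∞} [hq : Fact (1 ≤ q)] (hqt : q ≠ ⊤)
    (v : Fin m → ℝ) :
    pnorm q v = (∑ j, |v j| ^ q.toReal) ^ (1 / q.toReal) := by
  have hq0 : 0 < q.toReal := ENNReal.toReal_pos (zero_lt_one.trans_le hq.out).ne' hqt
  rw [pnorm, PiLp.norm_eq_sum hq0]
  simp [WithLp.equiv_symm_apply, PiLp.toLp_apply, Real.norm_eq_abs]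

private lemma pnorm_one_eq {m : ℕ} (v : Fin m → ℝ) : pnorm 1 v = ∑ j, |v j| := by
  rw [pnorm_eq_sum' (by simp)]
  simp

private lemma pnorm_top_eq {m : ℕ} (v : Fin m → ℝ) : pnorm ⊤ v = ⨆ j, |v j| := by
  rw [pnorm, PiLp.norm_eq_ciSup]
  simp [WithLp.equiv_symm_apply, PiLp.toLp_apply, Real.norm_eq_abs]

private lemma abs_le_pnorm_top {m : ℕ} (v : Fin m → ℝ) (j : Fin m) : |v j| ≤ pnorm ⊤ v := by
  rw [pnorm_top_eq]
  exact le_ciSup (Set.Finite.bddAbove (Set.finite_range fun j => |v j|)) j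

private lemma pnorm_top_le {m : ℕ} (hm : 0 < m) (v : Fin m → ℝ) {c : ℝ}
    (h : ∀ j, |v j| ≤ c) : pnorm ⊤ v ≤ c := by
  have : Nonempty (Fin m) := ⟨⟨0, hm⟩⟩
  rw [pnorm_top_eq]
  exact ciSup_le h

private lemma conj_trichotomy (p q : ℝ≥0∞) [hp : Fact (1 ≤ p)] [hq : Fact (1 ≤ q)]
    (hpq : 1 / p + 1 / q = 1) :
    (p = 1 ∧ q = ⊤) ∨ (p = ⊤ ∧ q = 1) ∨
      (p ≠ ⊤ ∧ q ≠ ⊤ ∧ Real.HolderConjugate p.toReal q.toReal) := by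
  rw [one_div, one_div] at hpq
  have hp0 : p ≠ 0 := (zero_lt_one.trans_le hp.out).ne'
  have hq0 : q ≠ 0 := (zero_lt_one.trans_le hq.out).ne'
  rcases eq_or_ne p 1 with rfl | hp1
  · left
    refine ⟨rfl, ?_⟩
    rw [inv_one] at hpq
    have h0 : (1 : ℝ≥0∞) + q⁻¹ = 1 + 0 := by simpa using hpq
    have : q⁻¹ = 0 := (ENNReal.add_right_inj (by simp)).1 h0
    simpa [ENNReal.inv_eq_zero] using this
  rcases eq_or_ne p ⊤ with rfl | hptop
  · right; left
    refine ⟨rfl, ?_⟩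
    have : q⁻¹ = 1 := by simpa using hpq
    simpa [ENNReal.inv_eq_one] using this
  · right; right
    have hp1' : 1 < p := lt_of_le_of_ne hp.out (Ne.symm hp1)
    have hqinv_ne : q⁻¹ ≠ 0 := by
      intro h0
      rw [h0, add_zero] at hpq
      exact hp1 (by simpa using congrArg Inv.inv hpq)
    have hqtop : q ≠ ⊤ := by simpa [ENNReal.inv_eq_zero] using hqinv_ne
    refine ⟨hptop, hqtop, Real.holderConjugate_iff.2 ⟨?_, ?_⟩⟩
    · have := (ENNReal.toReal_lt_toReal (by simp) hptop).2 hp1'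
      simpa using this
    · have h2 := congrArg ENNReal.toReal hpq
      rw [ENNReal.toReal_add (by simp [hp0]) (by simp [hq0]), ENNReal.toReal_inv,
        ENNReal.toReal_inv] at h2
      simpa using h2

/-- Hölder's inequality for `pnorm`. -/
private lemma sum_mul_le_pnorm {m : ℕ} (p q : ℝ≥0∞) [Fact (1 ≤ p)] [Fact (1 ≤ q)]
    (hpq : 1 / p + 1 / q = 1) (u w : Fin m → ℝ) :
    ∑ j, u j * w j ≤ pnorm p u * pnorm q w := by
  have h1 : ∑ j, u j * w j ≤ ∑ j, |u j| * |w j| :=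
    Finset.sum_le_sum fun j _ => (le_abs_self _).trans_eq (abs_mul _ _)
  rcases conj_trichotomy p q hpq with ⟨rfl, rfl⟩ | ⟨rfl, rfl⟩ | ⟨hpt, hqt, hc⟩
  · refine h1.trans ?_
    rw [pnorm_one_eq, Finset.sum_mul]
    exact Finset.sum_le_sum fun j _ =>
      mul_le_mul_of_nonneg_left (abs_le_pnorm_top w j) (abs_nonneg _)
  · refine h1.trans ?_
    rw [pnorm_one_eq, Finset.mul_sum]
    exact Finset.sum_le_sum fun j _ =>
      mul_le_mul_of_nonneg_right (abs_le_pnorm_top u j) (abs_nonneg _)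
  · rw [pnorm_eq_sum' hpt, pnorm_eq_sum' hqt]
    exact Real.inner_le_Lp_mul_Lq (s := Finset.univ) u w hc

/-- Attainment of the dual norm. -/
private lemma dual_attain {m : ℕ} (hm : 0 < m) (p q : ℝ≥0∞) [Fact (1 ≤ p)] [Fact (1 ≤ q)]
    (hpq : 1 / p + 1 / q = 1) (w : Fin m → ℝ) :
    ∃ u : Fin m → ℝ, pnorm p u ≤ 1 ∧ ∑ j, u j * w j = pnorm q w := by
  classical
  rcases conj_trichotomy p q hpq with ⟨rfl, rfl⟩ | ⟨rfl, rfl⟩ | ⟨hpt, hqt, hc⟩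
  · -- p = 1, q = ∞
    obtain ⟨j0, -, hj0⟩ := Finset.exists_max_image Finset.univ (fun j => |w j|)
      ⟨⟨0, hm⟩, Finset.mem_univ _⟩
    have htop : pnorm ⊤ w = |w j0| :=
      le_antisymm (pnorm_top_le hm w fun j => hj0 j (Finset.mem_univ _))
        (abs_le_pnorm_top w j0)
    refine ⟨fun j => if j = j0 then (if 0 ≤ w j0 then (1 : ℝ) else -1) else 0, ?_, ?_⟩
    · rw [pnorm_one_eq]
      have hone : ∑ j, |if j = j0 then (if 0 ≤ w j0 then (1 : ℝ) else -1) else 0| = 1 := by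
        rw [Finset.sum_eq_single_of_mem j0 (Finset.mem_univ _)
          (fun b _ hb => by simp [hb])]
        rcases le_or_gt 0 (w j0) with h | h
        · simp [h]
        · simp [not_le.2 h]
      exact le_of_eq hone
    · rw [htop, Finset.sum_eq_single_of_mem j0 (Finset.mem_univ _)
        (fun b _ hb => by simp [hb])]
      rcases le_or_gt 0 (w j0) with h | h
      · simp [h, abs_of_nonneg h]
      · simp [not_le.2 h, abs_of_neg h]
  · -- p = ∞, q = 1
    refine ⟨fun j => if 0 ≤ w j then (1 : ℝ) else -1, ?_, ?_⟩
    · apply pnorm_top_le hm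
      intro j; split_ifs <;> norm_num
    · rw [pnorm_one_eq]
      refine Finset.sum_congr rfl fun j _ => ?_
      rcases le_or_gt 0 (w j) with h | h
      · simp [h, abs_of_nonneg h]
      · simp [not_le.2 h, abs_of_neg h]
  · -- 1 < p, q < ∞
    have hqr1 : 1 < q.toReal := hc.symm.lt
    have hqr0 : 0 < q.toReal := by linarith
    have hpr0 : 0 < p.toReal := hc.pos
    by_cases hw : ∀ j, w j = 0
    · refine ⟨0, ?_, ?_⟩
      · rw [pnorm_eq_sum' hpt]
        simp [Real.zero_rpow hc.ne_zero, Real.zero_rpow (inv_ne_zero hc.ne_zero)]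
      · rw [pnorm_eq_sum' hqt]
        simp [hw, Real.zero_rpow hqr0.ne', Real.zero_rpow (inv_ne_zero hqr0.ne')]
    · push_neg at hw
      obtain ⟨j1, hj1⟩ := hw
      have hS : 0 < ∑ j, |w j| ^ q.toReal := by
        apply Finset.sum_pos' (fun j _ => Real.rpow_nonneg (abs_nonneg _) _)
        exact ⟨j1, Finset.mem_univ _, Real.rpow_pos_of_pos (abs_pos.2 hj1) _⟩
      set N : ℝ := (∑ j, |w j| ^ q.toReal) ^ (1 / q.toReal) with hN_def
      have hN : 0 < N := Real.rpow_pos_of_pos hS _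
      have hNq : N ^ q.toReal = ∑ j, |w j| ^ q.toReal := by
        rw [hN_def, ← Real.rpow_mul hS.le, one_div, inv_mul_cancel₀ hqr0.ne', Real.rpow_one]
      refine ⟨fun j => (if 0 ≤ w j then (1 : ℝ) else -1) * |w j| ^ (q.toReal - 1) /
        N ^ (q.toReal - 1), ?_, ?_⟩
      · rw [pnorm_eq_sum' hpt]
        have habs : ∀ j, |(if 0 ≤ w j then (1 : ℝ) else -1) * |w j| ^ (q.toReal - 1) /
            N ^ (q.toReal - 1)| = |w j| ^ (q.toReal - 1) / N ^ (q.toReal - 1) := by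
          intro j
          have hs : |(if 0 ≤ w j then (1 : ℝ) else -1)| = 1 := by split_ifs <;> norm_num
          rw [abs_div, abs_mul, hs, one_mul,
            abs_of_nonneg (Real.rpow_nonneg (abs_nonneg _) _),
            abs_of_nonneg (Real.rpow_nonneg hN.le _)]
        have hkey : (q.toReal - 1) * p.toReal = q.toReal := hc.symm.sub_one_mul_conj
        have hsum : ∑ j, |(if 0 ≤ w j then (1 : ℝ) else -1) * |w j| ^ (q.toReal - 1) /
            N ^ (q.toReal - 1)| ^ p.toReal = 1 := by
          have hterm : ∀ j ∈ Finset.univ, |(if 0 ≤ w j then (1 : ℝ) else -1) *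
              |w j| ^ (q.toReal - 1) / N ^ (q.toReal - 1)| ^ p.toReal
              = |w j| ^ q.toReal / N ^ q.toReal := by
            intro j _
            rw [habs j, Real.div_rpow (Real.rpow_nonneg (abs_nonneg _) _)
              (Real.rpow_nonneg hN.le _), ← Real.rpow_mul (abs_nonneg _),
              ← Real.rpow_mul hN.le, hkey]
          rw [Finset.sum_congr rfl hterm, ← Finset.sum_div, ← hNq,
            div_self (by positivity : N ^ q.toReal ≠ 0)]
        rw [hsum, Real.one_rpow]
      · rw [pnorm_eq_sum' hqt, ← hN_def]
        have hterm : ∀ j ∈ Finset.univ, (if 0 ≤ w j then (1 : ℝ) else -1) *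
            |w j| ^ (q.toReal - 1) / N ^ (q.toReal - 1) * w j
            = |w j| ^ q.toReal / N ^ (q.toReal - 1) := by
          intro j _
          have hsgn : (if 0 ≤ w j then (1 : ℝ) else -1) * w j = |w j| := by
            split_ifs with h
            · rw [one_mul, abs_of_nonneg h]
            · rw [neg_one_mul, abs_of_neg (not_le.1 h)]
          have hA : |w j| ^ (q.toReal - 1) * |w j| = |w j| ^ q.toReal := by
            rcases eq_or_ne (w j) 0 with h0 | h0
            · simp [h0, Real.zero_rpow (by linarith : q.toReal - 1 ≠ 0),
                Real.zero_rpow hqr0.ne']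
            · calc |w j| ^ (q.toReal - 1) * |w j|
                  = |w j| ^ (q.toReal - 1) * |w j| ^ (1 : ℝ) := by rw [Real.rpow_one]
                _ = |w j| ^ (q.toReal - 1 + 1) := (Real.rpow_add (abs_pos.2 h0) _ _).symm
                _ = |w j| ^ q.toReal := by congr 1; ring
          calc (if 0 ≤ w j then (1 : ℝ) else -1) * |w j| ^ (q.toReal - 1) /
                N ^ (q.toReal - 1) * w j
              = |w j| ^ (q.toReal - 1) * ((if 0 ≤ w j then (1 : ℝ) else -1) * w j) /
                N ^ (q.toReal - 1) := by ring
            _ = |w j| ^ (q.toReal - 1) * |w j| / N ^ (q.toReal - 1) := by rw [hsgn]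
            _ = |w j| ^ q.toReal / N ^ (q.toReal - 1) := by rw [hA]
        rw [Finset.sum_congr rfl hterm, ← Finset.sum_div, ← hNq, ← Real.rpow_sub hN]
        have : q.toReal - (q.toReal - 1) = 1 := by ring
        rw [this, Real.rpow_one]

/-- Reformulation of the sDFO problem with concave piecewise affine recourse
`Q(x, ξ) = min_k (ξᵀ a_k(x) + b_k(x))` and ball uncertainty set
`{ξ : ‖ξ − ξ⁰‖_p ≤ θ}`: its optimal value coincides with
`min_k min_{x∈X} ((ξ⁰)ᵀ a_k(x) + b_k(x) − θ‖a_k(x)‖_q)` where `q` is the Hölder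
conjugate of `p`, and all minima are attained (there is a common least value `v`). -/
theorem sdfo_concave_dual_norm_reformulation {n m K : ℕ} (hm : 0 < m) (hK : 0 < K)
    (X : Set (Fin n → ℝ)) (hne : X.Nonempty) (hcomp : IsCompact X)
    (A : Fin K → Matrix (Fin m) (Fin n) ℝ) (ahat : Fin K → Fin m → ℝ)
    (B : Fin K → Fin n → ℝ) (bhat : Fin K → ℝ)
    (ξ0 : Fin m → ℝ) (θ : ℝ) (hθ : 0 ≤ θ)
    (p q : ℝ≥0∞) [Fact (1 ≤ p)] [Fact (1 ≤ q)] (hpq : 1 / p + 1 / q = 1) :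
    let a : Fin K → (Fin n → ℝ) → Fin m → ℝ :=
      fun k x j => (∑ i, A k j i * x i) + ahat k j
    let b : Fin K → (Fin n → ℝ) → ℝ := fun k x => (∑ i, B k i * x i) + bhat k
    ∃ v : ℝ,
      IsLeast {r : ℝ | ∃ x ∈ X, ∃ ξ : Fin m → ℝ, pnorm p (ξ - ξ0) ≤ θ ∧
        ∃ k : Fin K, r = (∑ j, ξ j * a k x j) + b k x} v ∧
      IsLeast {r : ℝ | ∃ k : Fin K, ∃ x ∈ X,
        r = (∑ j, ξ0 j * a k x j) + b k x - θ * pnorm q (a k x)} v := by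
  intro a b
  classical
  set f : Fin K → (Fin n → ℝ) → ℝ :=
    fun k x => (∑ j, ξ0 j * a k x j) + b k x - θ * pnorm q (a k x) with hf
  have hconta : ∀ k, Continuous fun x : Fin n → ℝ => a k x := by
    intro k
    apply continuous_pi
    intro j
    exact (continuous_finset_sum _ fun i _ =>
      (continuous_const.mul (continuous_apply i))).add continuous_const
  have hcontn : Continuous fun v : Fin m → ℝ => pnorm q v :=
    continuous_norm.comp (PiLp.continuous_toLp _ _)
  have hcont : ∀ k, Continuous (f k) := by
    intro k
    apply Continuous.sub
    · apply Continuous.add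
      · exact continuous_finset_sum _ fun j _ =>
          continuous_const.mul ((continuous_apply j).comp (hconta k))
      · exact (continuous_finset_sum _ fun i _ =>
          continuous_const.mul (continuous_apply i)).add continuous_const
    · exact continuous_const.mul (hcontn.comp (hconta k))
  have hminx : ∀ k, ∃ x ∈ X, ∀ y ∈ X, f k x ≤ f k y := by
    intro k
    obtain ⟨x, hxX, hx⟩ := hcomp.exists_isMinOn hne (hcont k).continuousOn
    exact ⟨x, hxX, fun y hy => hx hy⟩
  choose xs hxsX hxs using hminx
  obtain ⟨k0, -, hk0⟩ := Finset.exists_min_image Finset.univ (fun k => f k (xs k))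
    ⟨⟨0, hK⟩, Finset.mem_univ _⟩
  have hlow : ∀ k, ∀ x ∈ X, f k0 (xs k0) ≤ f k x := fun k x hx =>
    le_trans (hk0 k (Finset.mem_univ k)) (hxs k x hx)
  refine ⟨f k0 (xs k0), ⟨?_, ?_⟩, ⟨?_, ?_⟩⟩
  · -- membership in the first set
    obtain ⟨u, hu1, hu2⟩ := dual_attain hm p q hpq (a k0 (xs k0))
    refine ⟨xs k0, hxsX k0, fun j => ξ0 j - θ * u j, ?_, k0, ?_⟩
    · have hdiff : (fun j => ξ0 j - θ * u j) - ξ0 = (-θ) • u := by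
        funext j
        simp only [Pi.sub_apply, Pi.smul_apply, smul_eq_mul]
        ring
      rw [hdiff, pnorm_smul, abs_neg, abs_of_nonneg hθ]
      calc θ * pnorm p u ≤ θ * 1 := mul_le_mul_of_nonneg_left hu1 hθ
        _ = θ := mul_one θ
    · have hsum : ∑ j, (ξ0 j - θ * u j) * a k0 (xs k0) j
          = (∑ j, ξ0 j * a k0 (xs k0) j) - θ * ∑ j, u j * a k0 (xs k0) j := by
        rw [Finset.mul_sum, ← Finset.sum_sub_distrib]
        exact Finset.sum_congr rfl fun j _ => by ring
      simp only [hf]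
      rw [hsum, hu2]
      ring
  · -- lower bound for the first set
    rintro r ⟨x, hxX, ξ, hξ, k, rfl⟩
    have h1 : ∑ j, (ξ0 j - ξ j) * a k x j ≤ θ * pnorm q (a k x) := by
      have hh := sum_mul_le_pnorm p q hpq (fun j => ξ0 j - ξ j) (a k x)
      have hnorm : pnorm p (fun j => ξ0 j - ξ j) = pnorm p (ξ - ξ0) := by
        have hfun : (fun j => ξ0 j - ξ j) = (-1 : ℝ) • (ξ - ξ0) := by
          funext j
          simp only [Pi.smul_apply, Pi.sub_apply, smul_eq_mul]
          ring
        rw [hfun, pnorm_smul]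
        simp
      rw [hnorm] at hh
      exact hh.trans (mul_le_mul_of_nonneg_right hξ (pnorm_nonneg q _))
    have h2 : ∑ j, (ξ0 j - ξ j) * a k x j
        = (∑ j, ξ0 j * a k x j) - ∑ j, ξ j * a k x j := by
      rw [← Finset.sum_sub_distrib]
      exact Finset.sum_congr rfl fun j _ => by ring
    rw [h2] at h1
    have h3 := hlow k x hxX
    simp only [hf] at h3 ⊢
    linarith
  · -- membership in the second set
    exact ⟨k0, xs k0, hxsX k0, rfl⟩
  · -- lower bound for the second set
    rintro r ⟨k, x, hx, rfl⟩
    exact hlow k x hx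
end

section
/- Let X ⊆ ℝⁿ be a nonempty compact set, K and m positive integers, and for each k ∈ [K] let a_k(x) = Â_k x + â_k ∈ ℝ^m and b_k(x) = B̂_kᵀ x + b̂_k ∈ ℝ be affine maps; let ξ⁰ ∈ ℝ^m and θ ≥ 0. Then min_{k∈[K]} min_{x∈X} ( (ξ⁰)ᵀ a_k(x) + b_k(x) − θ ‖a_k(x)‖_∞ ) = min_{k∈[K]} min_{i∈[m]} min{ min_{x∈X} ( (ξ⁰)ᵀ a_k(x) + b_k(x) + θ a_{ki}(x) ), min_{x∈X} ( (ξ⁰)ᵀ a_k(x) + b_k(x) − θ a_{ki}(x) ) }, where a_{ki}(x) denotes the i-th coordinate of a_k(x); in particular the sDFO problem with p = 1 is solved by selecting the smallest optimal value among these 2mK convex programs, and all minima are attained. -/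
/-- sDFO with concave piecewise affine recourse and `p = 1` (dual norm `ℓ_∞`): the value
`min_k min_{x∈X} ((ξ⁰)ᵀ a_k(x) + b_k(x) − θ‖a_k(x)‖_∞)` equals the smallest of the
optimal values of the `2mK` convex programs
`min_{x∈X} ((ξ⁰)ᵀ a_k(x) + b_k(x) ± θ a_{ki}(x))`, and all minima are attained. -/
theorem sdfo_concave_linf_two_mK_programs {n m K : ℕ} (hm : 0 < m) (hK : 0 < K)
    (X : Set (Fin n → ℝ)) (hne : X.Nonempty) (hcomp : IsCompact X)
    (A : Fin K → Matrix (Fin m) (Fin n) ℝ) (ahat : Fin K → Fin m → ℝ)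
    (B : Fin K → Fin n → ℝ) (bhat : Fin K → ℝ)
    (ξ0 : Fin m → ℝ) (θ : ℝ) (hθ : 0 ≤ θ) :
    let a : Fin K → (Fin n → ℝ) → Fin m → ℝ :=
      fun k x j => (∑ i, A k j i * x i) + ahat k j
    let b : Fin K → (Fin n → ℝ) → ℝ := fun k x => (∑ i, B k i * x i) + bhat k
    ∃ v : ℝ,
      IsLeast {r : ℝ | ∃ k : Fin K, ∃ x ∈ X,
        r = (∑ j, ξ0 j * a k x j) + b k x - θ * ⨆ j, |a k x j|} v ∧
      IsLeast {r : ℝ | ∃ k : Fin K, ∃ i : Fin m, ∃ x ∈ X,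
        r = (∑ j, ξ0 j * a k x j) + b k x + θ * a k x i ∨
        r = (∑ j, ξ0 j * a k x j) + b k x - θ * a k x i} v := by
  intro a b
  haveI : Nonempty (Fin m) := ⟨⟨0, hm⟩⟩
  haveI : Nonempty (Fin K) := ⟨⟨0, hK⟩⟩
  -- objective without the sup term
  set f : Fin K → (Fin n → ℝ) → ℝ :=
    fun k x => (∑ j, ξ0 j * a k x j) + b k x with hf
  -- the 2mK objectives
  set g : Fin K → Fin m → Bool → (Fin n → ℝ) → ℝ :=
    fun k i s x => f k x + (if s then θ * a k x i else -(θ * a k x i)) with hgdef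
  -- sup is attained
  have sup_spec : ∀ (k : Fin K) (x : Fin n → ℝ), ∃ i : Fin m,
      (⨆ j, |a k x j|) = |a k x i| ∧ ∀ j, |a k x j| ≤ |a k x i| := by
    intro k x
    obtain ⟨i, hi⟩ := Finite.exists_max (fun j => |a k x j|)
    refine ⟨i, le_antisymm (ciSup_le hi) ?_, hi⟩
    exact le_ciSup (f := fun j => |a k x j|) (Set.finite_range _).bddAbove i
  -- continuity
  have hg : ∀ k i s, Continuous (g k i s) := by
    intro k i s
    have ha : ∀ j, Continuous fun x : Fin n → ℝ => a k x j := fun j =>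
      (continuous_finset_sum _ fun i _ =>
        continuous_const.mul (continuous_apply i)).add continuous_const
    have hfc : Continuous (f k) :=
      (continuous_finset_sum _ fun j _ => continuous_const.mul (ha j)).add
        ((continuous_finset_sum _ fun i _ =>
          continuous_const.mul (continuous_apply i)).add continuous_const)
    cases s
    · exact hfc.add (continuous_const.mul (ha i)).neg
    · exact hfc.add (continuous_const.mul (ha i))
  -- minimizers of each program
  have hmin : ∀ k i s, ∃ x ∈ X, IsMinOn (g k i s) X x := fun k i s =>
    hcomp.exists_isMinOn hne (hg k i s).continuousOn
  choose xm hxmX hxm using hmin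
  -- least of the finitely many optimal values
  obtain ⟨⟨k0, i0, s0⟩, hp0⟩ := Finite.exists_min
    (fun p : Fin K × Fin m × Bool => g p.1 p.2.1 p.2.2 (xm p.1 p.2.1 p.2.2))
  set v : ℝ := g k0 i0 s0 (xm k0 i0 s0) with hv
  have hvle : ∀ k i s (x : Fin n → ℝ), x ∈ X → v ≤ g k i s x := by
    intro k i s x hx
    exact le_trans (hp0 (k, i, s)) (hxm k i s hx)
  -- v is a lower bound for the set1 values
  have hlb1 : ∀ (k : Fin K) (x : Fin n → ℝ), x ∈ X →
      v ≤ f k x - θ * ⨆ j, |a k x j| := by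
    intro k x hx
    obtain ⟨i, hi, _⟩ := sup_spec k x
    rw [hi]
    rcases le_or_gt 0 (a k x i) with h | h
    · have heq : f k x - θ * |a k x i| = g k i false x := by
        simp [hgdef, abs_of_nonneg h, sub_eq_add_neg]
      rw [heq]; exact hvle k i false x hx
    · have heq : f k x - θ * |a k x i| = g k i true x := by
        simp [hgdef, abs_of_neg h]
      rw [heq]; exact hvle k i true x hx
  refine ⟨v, ⟨?_, ?_⟩, ⟨?_, ?_⟩⟩
  · -- v ∈ set1
    refine ⟨k0, xm k0 i0 s0, hxmX k0 i0 s0, ?_⟩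
    set x0 := xm k0 i0 s0 with hx0
    have h1 : v ≤ f k0 x0 - θ * ⨆ j, |a k0 x0 j| := hlb1 k0 x0 (hxmX k0 i0 s0)
    have h2 : f k0 x0 - θ * ⨆ j, |a k0 x0 j| ≤ v := by
      obtain ⟨i, hi, hall⟩ := sup_spec k0 x0
      rw [hi]
      have habs0 : -(θ * |a k0 x0 i0|) ≤
          (if s0 then θ * a k0 x0 i0 else -(θ * a k0 x0 i0)) := by
        have h1' := mul_le_mul_of_nonneg_left (neg_abs_le (a k0 x0 i0)) hθ
        have h2' := mul_le_mul_of_nonneg_left (le_abs_self (a k0 x0 i0)) hθ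
        cases s0 <;> simp only [if_true, Bool.false_eq_true, if_false] <;> linarith
      have hi0 : θ * |a k0 x0 i0| ≤ θ * |a k0 x0 i| :=
        mul_le_mul_of_nonneg_left (hall i0) hθ
      have hvv : v = f k0 x0 + (if s0 then θ * a k0 x0 i0 else -(θ * a k0 x0 i0)) := rfl
      rw [hvv]; linarith
    exact (le_antisymm h2 h1).symm
  · -- v lower bound for set1
    rintro r ⟨k, x, hx, rfl⟩
    exact hlb1 k x hx
  · -- v ∈ set2
    refine ⟨k0, i0, xm k0 i0 s0, hxmX k0 i0 s0, ?_⟩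
    cases s0
    · right; simp [hv, hgdef, hf, sub_eq_add_neg]
    · left; simp [hv, hgdef, hf]
  · -- v lower bound for set2
    rintro r ⟨k, i, x, hx, (rfl | rfl)⟩
    · have := hvle k i true x hx
      simpa [hgdef] using this
    · have := hvle k i false x hx
      simpa [hgdef, sub_eq_add_neg] using this
end

section
/- Let X ⊆ ℝⁿ be a nonempty compact set, K and m positive integers, a(x) = Âx + â ∈ ℝ^m an affine map, and for each k ∈ [K] let b_k(x) = B̂_kᵀ x + b̂_k ∈ ℝ be affine; let ξ⁰ ∈ ℝ^m and θ ≥ 0. Then min_{x∈X} min_{ξ : ‖ξ−ξ⁰‖₁ ≤ θ} max_{k∈[K]} ( ξᵀ a(x) + b_k(x) ) = min_{i∈[m]} min{ min_{x∈X} max_{k∈[K]} ( b_k(x) + (ξ⁰)ᵀ a(x) − θ a_i(x) ), min_{x∈X} max_{k∈[K]} ( b_k(x) + (ξ⁰)ᵀ a(x) + θ a_i(x) ) }, where a_i(x) denotes the i-th coordinate of a(x); in particular, when the affine maps a_k all coincide and p = 1, the sDFO problem with convex piecewise affine recourse is solved by 2m convex programs, and all minima are attained. -/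
/-!
Since all pieces share the slope `a(x)`, the recourse splits as
`Q(x, ξ) = ξᵀ a(x) + max_k b_k(x)`. By Hölder's inequality for the dual pair `ℓ₁`/`ℓ∞`, the
minimum of `ξᵀ a` over the ball `‖ξ - ξ⁰‖₁ ≤ θ` is `(ξ⁰)ᵀ a - θ ‖a‖_∞`, attained at a vertex
`ξ⁰ ∓ θ eᵢ`; and `-θ ‖a‖_∞` is in turn the smallest of the `2m` numbers `∓θ aᵢ`. Hence both
sides are the minimum over `X` of the continuous function
`x ↦ (ξ⁰)ᵀ a(x) - θ ‖a(x)‖_∞ + max_k b_k(x)`, which exists by compactness.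
-/

open Matrix

section FiniteSup

variable {ι L : Type*} [Finite ι] [Nonempty ι] [ConditionallyCompleteLattice L] [AddGroup L]

theorem ciSup_add_const_of_finite [AddRightMono L] (f : ι → L) (c : L) :
    ⨆ i, (f i + c) = (⨆ i, f i) + c :=
  ((OrderIso.addRight c).map_ciSup (Set.finite_range f).bddAbove).symm

theorem ciSup_const_add_of_finite [AddLeftMono L] (f : ι → L) (c : L) :
    ⨆ i, (c + f i) = c + ⨆ i, f i :=
  ((OrderIso.addLeft c).map_ciSup (Set.finite_range f).bddAbove).symm

end FiniteSup

theorem Continuous.ciSup_of_fintype {α ι L : Type*} [TopologicalSpace α] [Fintype ι] [Nonempty ι]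
    [ConditionallyCompleteLattice L] [TopologicalSpace L] [ContinuousSup L]
    {f : ι → α → L} (hf : ∀ i, Continuous (f i)) : Continuous fun x => ⨆ i, f i x := by
  simp only [← Finset.sup'_univ_eq_ciSup]
  exact Continuous.finset_sup'_apply _ fun i _ => hf i

theorem IsMinOn.isLeast_setOf_exists_mem {α β : Type*} [Preorder β] {φ : α → β} {s : Set α}
    {x₀ : α} {T : α → β → Prop} (hmin : IsMinOn φ s x₀) (hx₀ : x₀ ∈ s)
    (hT : ∀ x ∈ s, IsLeast {r | T x r} (φ x)) : IsLeast {r | ∃ x ∈ s, T x r} (φ x₀) :=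
  ⟨⟨x₀, hx₀, (hT x₀ hx₀).1⟩, fun _ ⟨x, hx, hr⟩ => (hmin hx).trans ((hT x hx).2 hr)⟩

section L1Ball

variable {ι : Type*} [Fintype ι] {θ : ℝ}

theorem sub_mul_norm_le_dotProduct_of_sum_abs_sub_le {c a ξ : ι → ℝ}
    (hξ : ∑ j, |ξ j - c j| ≤ θ) : c ⬝ᵥ a - θ * ‖a‖ ≤ ξ ⬝ᵥ a := by
  have hholder : |(ξ - c) ⬝ᵥ a| ≤ θ * ‖a‖ :=
    calc |(ξ - c) ⬝ᵥ a| ≤ ∑ j, |ξ j - c j| * |a j| := by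
          simpa only [dotProduct, Pi.sub_apply, abs_mul] using
            Finset.abs_sum_le_sum_abs (fun j => (ξ j - c j) * a j) Finset.univ
      _ ≤ ∑ j, |ξ j - c j| * ‖a‖ := by
          gcongr with j
          exact norm_le_pi_norm a j
      _ ≤ θ * ‖a‖ := by
          rw [← Finset.sum_mul]
          gcongr
  rw [sub_dotProduct] at hholder
  linarith [neg_abs_le (ξ ⬝ᵥ a - c ⬝ᵥ a)]

theorem exists_sum_abs_sub_le_dotProduct_eq [Nonempty ι] (c a : ι → ℝ) (hθ : 0 ≤ θ) :
    ∃ ξ : ι → ℝ, ∑ j, |ξ j - c j| ≤ θ ∧ ξ ⬝ᵥ a = c ⬝ᵥ a - θ * ‖a‖ := by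
  classical
  obtain ⟨⟨i, hi : ‖a i‖ = ‖a‖⟩, -⟩ := IsGreatest.pi_norm a
  refine ⟨c - Pi.single i (θ * SignType.sign (a i) : ℝ), ?_, ?_⟩
  · have hsign : |(SignType.sign (a i) : ℝ)| ≤ 1 := by
      cases SignType.sign (a i) <;> simp
    simp only [Pi.sub_apply, sub_sub_cancel_left, abs_neg, Pi.single_apply, apply_ite abs,
      abs_zero, Finset.sum_ite_eq', Finset.mem_univ, if_true, abs_mul, abs_of_nonneg hθ]
    exact mul_le_of_le_one_right hθ hsign
  · rw [sub_dotProduct, single_dotProduct, mul_assoc, sign_mul_self, ← hi, Real.norm_eq_abs]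

variable {f : ℝ → ℝ}

theorem Monotone.isLeast_comp_dotProduct_on_l1Ball [Nonempty ι] (hf : Monotone f)
    (c a : ι → ℝ) (hθ : 0 ≤ θ) :
    IsLeast {r | ∃ ξ : ι → ℝ, ∑ j, |ξ j - c j| ≤ θ ∧ r = f (ξ ⬝ᵥ a)}
      (f (c ⬝ᵥ a - θ * ‖a‖)) := by
  obtain ⟨ξ, hξ, hval⟩ := exists_sum_abs_sub_le_dotProduct_eq c a hθ
  refine ⟨⟨ξ, hξ, by rw [hval]⟩, ?_⟩
  rintro r ⟨ξ, hξ, rfl⟩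
  exact hf (sub_mul_norm_le_dotProduct_of_sum_abs_sub_le hξ)

theorem Monotone.isLeast_comp_neg_mul_or_mul [Nonempty ι] (hf : Monotone f) (a : ι → ℝ)
    (hθ : 0 ≤ θ) :
    IsLeast {r | ∃ i, r = f (-(θ * a i)) ∨ r = f (θ * a i)} (f (-(θ * ‖a‖))) := by
  refine ⟨?_, ?_⟩
  · obtain ⟨⟨i, hi : ‖a i‖ = ‖a‖⟩, -⟩ := IsGreatest.pi_norm a
    refine ⟨i, ?_⟩
    rw [← hi, Real.norm_eq_abs]
    rcases abs_choice (a i) with h | h <;> rw [h]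
    · exact Or.inl rfl
    · exact Or.inr (by rw [mul_neg, neg_neg])
  · have hbound (i : ι) : |θ * a i| ≤ θ * ‖a‖ := by
      rw [abs_mul, abs_of_nonneg hθ, ← Real.norm_eq_abs]
      exact mul_le_mul_of_nonneg_left (norm_le_pi_norm a i) hθ
    rintro r ⟨i, rfl | rfl⟩ <;> apply hf <;> linarith [abs_le.mp (hbound i)]

end L1Ball

/-- sDFO with convex piecewise affine recourse `Q(x, ξ) = max_k (ξᵀ a(x) + b_k(x))`
(all pieces sharing the same affine map `a`) and `ℓ₁`-ball uncertainty set
`{ξ : ‖ξ − ξ⁰‖₁ ≤ θ}`: the optimal value is the smallest of the optimal values of the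
`2m` convex programs `min_{x∈X} max_k (b_k(x) + (ξ⁰)ᵀ a(x) ∓ θ a_i(x))`, and all
minima are attained. -/
theorem sdfo_convex_common_a_l1 {n m K : ℕ} (hm : 0 < m) (hK : 0 < K)
    (X : Set (Fin n → ℝ)) (hne : X.Nonempty) (hcomp : IsCompact X)
    (A : Matrix (Fin m) (Fin n) ℝ) (ahat : Fin m → ℝ)
    (B : Fin K → Fin n → ℝ) (bhat : Fin K → ℝ)
    (ξ0 : Fin m → ℝ) (θ : ℝ) (hθ : 0 ≤ θ) :
    let a : (Fin n → ℝ) → Fin m → ℝ := fun x j => (∑ i, A j i * x i) + ahat j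
    let b : Fin K → (Fin n → ℝ) → ℝ := fun k x => (∑ i, B k i * x i) + bhat k
    ∃ v : ℝ,
      IsLeast {r : ℝ | ∃ x ∈ X, ∃ ξ : Fin m → ℝ, (∑ j, |ξ j - ξ0 j|) ≤ θ ∧
        r = ⨆ k : Fin K, ((∑ j, ξ j * a x j) + b k x)} v ∧
      IsLeast {r : ℝ | ∃ i : Fin m, ∃ x ∈ X,
        r = (⨆ k : Fin K, (b k x + (∑ j, ξ0 j * a x j) - θ * a x i)) ∨
        r = (⨆ k : Fin K, (b k x + (∑ j, ξ0 j * a x j) + θ * a x i))} v := by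
  intro a b
  have : Nonempty (Fin m) := Fin.pos_iff_nonempty.mp hm
  have : Nonempty (Fin K) := Fin.pos_iff_nonempty.mp hK
  let G x := ⨆ k, b k x
  let φ x := ξ0 ⬝ᵥ a x - θ * ‖a x‖ + G x
  have hφ : Continuous φ := by
    have ha : Continuous a := by fun_prop
    have hG : Continuous G := Continuous.ciSup_of_fintype fun k => by fun_prop
    fun_prop
  obtain ⟨x₀, hx₀, hmin⟩ := hcomp.exists_isMinOn hne hφ.continuousOn
  refine ⟨φ x₀, hmin.isLeast_setOf_exists_mem hx₀ fun x _ => ?_, ?_⟩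
  · simp only [ciSup_const_add_of_finite]
    exact add_left_mono.isLeast_comp_dotProduct_on_l1Ball ξ0 (a x) hθ
  · simp only [exists_comm (α := Fin m), exists_and_left]
    refine hmin.isLeast_setOf_exists_mem hx₀ fun x _ => ?_
    simp only [sub_eq_add_neg, add_assoc, ciSup_add_const_of_finite]
    have hf : Monotone fun t => G x + (ξ0 ⬝ᵥ a x + t) := add_right_mono.comp add_right_mono
    have hφx : φ x = G x + (ξ0 ⬝ᵥ a x + -(θ * ‖a x‖)) := by ring
    rw [hφx]
    exact hf.isLeast_comp_neg_mul_or_mul (a x) hθ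
end

section
/- Let K be a positive integer, c ∈ ℝ^K, C ∈ ℝ^K with C_k ≥ 0 for all k, and θ ≥ 0. Then max_{λ ∈ Δ_K} ( Σ_{k∈[K]} λ_k c_k − θ max_{k∈[K]} λ_k C_k ) = min { max_{k∈[K]} ( c_k − γ_k C_k ) : γ ∈ ℝ^K, γ ≥ 0, Σ_{k∈[K]} γ_k = θ }, where Δ_K = {λ ∈ ℝ^K : λ ≥ 0, Σ_k λ_k = 1}, and both optima are attained. -/
lemma fin_ciSup_eq {K : ℕ} (f : Fin K → ℝ) (v : ℝ) (h1 : ∀ k, f k ≤ v)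
    (h2 : ∃ k, f k = v) : (⨆ k, f k) = v := by
  obtain ⟨k, hk⟩ := h2
  have : Nonempty (Fin K) := ⟨k⟩
  refine le_antisymm (ciSup_le h1) ?_
  calc v = f k := hk.symm
    _ ≤ ⨆ k, f k := le_ciSup (Set.Finite.bddAbove (Set.finite_range f)) k

/-- Linear-programming strong duality identity:
`max_{λ ∈ Δ_K} (∑_k λ_k c_k − θ max_k λ_k C_k)
  = min { max_k (c_k − γ_k C_k) : γ ≥ 0, ∑_k γ_k = θ }`,
for `C ≥ 0` and `θ ≥ 0`, and both optima are attained. -/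
theorem simplex_max_min_duality {K : ℕ} (hK : 0 < K) (c C : Fin K → ℝ)
    (hC : ∀ k, 0 ≤ C k) (θ : ℝ) (hθ : 0 ≤ θ) :
    ∃ v : ℝ,
      IsGreatest {r : ℝ | ∃ lam : Fin K → ℝ, (∀ k, 0 ≤ lam k) ∧ (∑ k, lam k) = 1 ∧
        r = (∑ k, lam k * c k) - θ * ⨆ k, lam k * C k} v ∧
      IsLeast {r : ℝ | ∃ γ : Fin K → ℝ, (∀ k, 0 ≤ γ k) ∧ (∑ k, γ k) = θ ∧
        r = ⨆ k, (c k - γ k * C k)} v := by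
  have hne : Nonempty (Fin K) := ⟨⟨0, hK⟩⟩
  -- weak duality
  have wd : ∀ lam γ : Fin K → ℝ, (∀ k, 0 ≤ lam k) → (∑ k, lam k) = 1 →
      (∀ k, 0 ≤ γ k) → (∑ k, γ k) = θ →
      (∑ k, lam k * c k) - θ * (⨆ k, lam k * C k) ≤ ⨆ k, (c k - γ k * C k) := by
    intro lam γ hlam hlam1 hγ hγθ
    set M := ⨆ k, lam k * C k with hM
    set D := ⨆ k, (c k - γ k * C k) with hD
    have hbM : ∀ k, lam k * C k ≤ M := fun k =>
      le_ciSup (f := fun k => lam k * C k)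
        (Set.Finite.bddAbove (Set.finite_range _)) k
    have hbD : ∀ k, c k - γ k * C k ≤ D := fun k =>
      le_ciSup (f := fun k => c k - γ k * C k)
        (Set.Finite.bddAbove (Set.finite_range _)) k
    have key : ∀ k, lam k * c k ≤ lam k * D + γ k * M := by
      intro k
      have h1 : lam k * (c k - γ k * C k) ≤ lam k * D :=
        mul_le_mul_of_nonneg_left (hbD k) (hlam k)
      have h2 : γ k * (lam k * C k) ≤ γ k * M :=
        mul_le_mul_of_nonneg_left (hbM k) (hγ k)
      nlinarith
    have hsum : (∑ k, lam k * c k) ≤ ∑ k, (lam k * D + γ k * M) :=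
      Finset.sum_le_sum (fun k _ => key k)
    have hsplit : (∑ k, (lam k * D + γ k * M)) = D + θ * M := by
      rw [Finset.sum_add_distrib, ← Finset.sum_mul, ← Finset.sum_mul, hlam1, hγθ]
      ring
    linarith [hsum, hsplit ▸ hsum]
  -- strong duality: a feasible pair achieving a common value
  obtain ⟨v, lam, hl0, hl1, hlv, γ, hg0, hgθ, hgv⟩ :
      ∃ v : ℝ, ∃ lam : Fin K → ℝ, (∀ k, 0 ≤ lam k) ∧ (∑ k, lam k) = 1 ∧
        (∑ k, lam k * c k) - θ * (⨆ k, lam k * C k) = v ∧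
        ∃ γ : Fin K → ℝ, (∀ k, 0 ≤ γ k) ∧ (∑ k, γ k) = θ ∧ (⨆ k, (c k - γ k * C k)) = v := by
    obtain ⟨j, hj⟩ := Finite.exists_max c
    by_cases hθ0 : θ = 0
    · -- θ = 0 : take λ = e_j at the argmax, γ = 0
      subst hθ0
      refine ⟨c j, (fun k => if k = j then 1 else 0), ?_, ?_, ?_,
        (fun _ => 0), fun k => le_refl 0, by simp, ?_⟩
      · intro k; dsimp only; split_ifs <;> norm_num
      · simp
      · have h1 : (∑ k, (if k = j then (1:ℝ) else 0) * c k) = c j := by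
          simp [ite_mul]
        rw [h1]; ring
      · refine fin_ciSup_eq _ _ (fun k => ?_) ⟨j, by dsimp only; ring⟩
        dsimp only
        have := hj k; nlinarith [hC k]
    · have hθpos : 0 < θ := lt_of_le_of_ne hθ (Ne.symm hθ0)
      by_cases hC0 : ∀ k, C k = 0
      · -- all C zero : same primal, γ puts everything at j
        refine ⟨c j, (fun k => if k = j then 1 else 0), ?_, ?_, ?_,
          (fun k => if k = j then θ else 0), ?_, by simp, ?_⟩
        · intro k; dsimp only; split_ifs <;> norm_num
        · simp
        · have h1 : (∑ k, (if k = j then (1:ℝ) else 0) * c k) = c j := by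
            simp [ite_mul]
          have h2 : (⨆ k, (if k = j then (1:ℝ) else 0) * C k) = 0 := by
            refine fin_ciSup_eq _ _ (fun k => ?_) ⟨j, by simp [hC0 j]⟩
            simp [hC0 k]
          rw [h1, h2]; ring
        · intro k; dsimp only; split_ifs; exacts [le_of_lt hθpos, le_rfl]
        · refine fin_ciSup_eq _ _ (fun k => ?_) ⟨j, by simp [hC0 j]⟩
          dsimp only; simp only [hC0 k, mul_zero, sub_zero]; exact hj k
      · -- some C positive : water-filling
        push_neg at hC0
        obtain ⟨k0, hk0⟩ := hC0
        have hk0' : 0 < C k0 := lt_of_le_of_ne (hC k0) (Ne.symm hk0)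
        set φ : ℝ → ℝ := fun t => ∑ k, if 0 < C k then max 0 ((c k - t) / C k) else 0
          with hφdef
        have hφanti : ∀ s t : ℝ, s ≤ t → φ t ≤ φ s := by
          intro s t hst
          refine Finset.sum_le_sum fun k _ => ?_
          by_cases h : 0 < C k
          · simp only [if_pos h]
            exact max_le_max le_rfl ((div_le_div_iff_of_pos_right h).mpr (by linarith))
          · simp [if_neg h]
        have hφcont : Continuous φ := by
          refine continuous_finset_sum _ fun k _ => ?_
          by_cases h : 0 < C k
          · simp only [if_pos h]
            exact continuous_const.max ((continuous_const.sub continuous_id).div_const _)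
          · simp only [if_neg h]; exact continuous_const
        have hφb : φ (c j) = 0 := by
          refine Finset.sum_eq_zero fun k _ => ?_
          by_cases h : 0 < C k
          · simp only [if_pos h]
            exact max_eq_left (div_nonpos_of_nonpos_of_nonneg (by linarith [hj k]) (hC k))
          · simp [if_neg h]
        have hφa : θ ≤ φ (c k0 - θ * C k0) := by
          have hterm : max 0 ((c k0 - (c k0 - θ * C k0)) / C k0) = θ := by
            rw [show c k0 - (c k0 - θ * C k0) = θ * C k0 by ring,
              mul_div_assoc, div_self (ne_of_gt hk0'), mul_one, max_eq_right hθ]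
          calc θ = if 0 < C k0 then max 0 ((c k0 - (c k0 - θ * C k0)) / C k0) else 0 := by
                rw [if_pos hk0', hterm]
            _ ≤ φ (c k0 - θ * C k0) := by
                simp only [hφdef]
                refine Finset.single_le_sum
                  (f := fun k => if 0 < C k then max 0 ((c k - (c k0 - θ * C k0)) / C k) else 0)
                  (fun k _ => ?_) (Finset.mem_univ k0)
                by_cases h : 0 < C k <;> simp [h, le_max_left]
        obtain ⟨t0, ht0mem, hφt0⟩ : ∃ t0 ∈ Set.uIcc (c k0 - θ * C k0) (c j), φ t0 = θ := by
          have hsub := intermediate_value_uIcc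
            (hφcont.continuousOn (s := Set.uIcc (c k0 - θ * C k0) (c j)))
          have hmem : θ ∈ Set.uIcc (φ (c k0 - θ * C k0)) (φ (c j)) := by
            rw [Set.mem_uIcc]
            exact Or.inr ⟨by rw [hφb]; exact hθ, hφa⟩
          obtain ⟨t0, ht0, h⟩ := hsub hmem
          exact ⟨t0, ht0, h⟩
        by_cases hB : ∃ j', C j' = 0 ∧ t0 ≤ c j'
        · -- some zero-C coordinate dominates : optimum is max of c over {C = 0}
          classical
          set T : Finset (Fin K) := Finset.univ.filter (fun k => C k = 0) with hT
          obtain ⟨j', hj'0, hj't⟩ := hB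
          have hTne : T.Nonempty := ⟨j', by simp [hT, hj'0]⟩
          obtain ⟨j0, hj0T, hj0max⟩ := T.exists_max_image c hTne
          have hCj0 : C j0 = 0 := by simpa [hT] using hj0T
          have hcT : ∀ k, C k = 0 → c k ≤ c j0 := fun k hk => hj0max k (by simp [hT, hk])
          have htv : t0 ≤ c j0 := le_trans hj't (hcT j' hj'0)
          have hφv : φ (c j0) ≤ θ := by rw [← hφt0]; exact hφanti t0 (c j0) htv
          refine ⟨c j0, (fun k => if k = j0 then 1 else 0), ?_, ?_, ?_,
            (fun k => (if 0 < C k then max 0 ((c k - c j0) / C k) else 0) +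
              (if k = j0 then θ - φ (c j0) else 0)), ?_, ?_, ?_⟩
          · intro k; dsimp only; split_ifs <;> norm_num
          · simp
          · have h1 : (∑ k, (if k = j0 then (1:ℝ) else 0) * c k) = c j0 := by
              simp [ite_mul]
            have h2 : (⨆ k, (if k = j0 then (1:ℝ) else 0) * C k) = 0 := by
              refine fin_ciSup_eq _ _ (fun k => ?_) ⟨j0, by simp [hCj0]⟩
              by_cases h : k = j0
              · subst h; simp [hCj0]
              · simp [h]
            rw [h1, h2]; ring
          · intro k
            dsimp only
            apply add_nonneg
            · by_cases h : 0 < C k <;> simp [h, le_max_left]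
            · by_cases h : k = j0 <;> simp [h]; linarith
          · rw [Finset.sum_add_distrib]
            have h1 : (∑ k, if k = j0 then θ - φ (c j0) else 0) = θ - φ (c j0) := by simp
            have h2 : (∑ k, if 0 < C k then max 0 ((c k - c j0) / C k) else 0) = φ (c j0) := rfl
            rw [h1, h2]; ring
          · refine fin_ciSup_eq _ _ (fun k => ?_) ⟨j0, by simp [hCj0]⟩
            dsimp only
            by_cases h : 0 < C k
            · have hkj : k ≠ j0 := by intro e; rw [e, hCj0] at h; exact lt_irrefl 0 h
              simp only [if_pos h, if_neg hkj, add_zero]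
              by_cases hcv : c k ≤ c j0
              · rw [max_eq_left (div_nonpos_of_nonpos_of_nonneg (by linarith) (hC k))]
                simpa using hcv
              · push_neg at hcv
                rw [max_eq_right (div_nonneg (by linarith) (hC k)),
                  div_mul_cancel₀ _ (ne_of_gt h)]
                linarith
            · have hCk : C k = 0 := le_antisymm (not_lt.mp h) (hC k)
              simp only [hCk, mul_zero, sub_zero]
              exact hcT k hCk
        · -- regular case : water-filling level t0 is optimal
          push_neg at hB
          have hφpos : 0 < φ t0 := by rw [hφt0]; exact hθpos
          obtain ⟨k1, -, hk1⟩ := Finset.exists_lt_of_sum_lt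
            (f := fun _ : Fin K => (0:ℝ))
            (g := fun k => if 0 < C k then max 0 ((c k - t0) / C k) else 0)
            (by simpa using hφpos)
          have hk1C : 0 < C k1 := by
            by_contra h; simp [h] at hk1
          have hk1c : t0 < c k1 := by
            simp only [if_pos hk1C] at hk1
            by_contra h
            push_neg at h
            rw [max_eq_left (div_nonpos_of_nonpos_of_nonneg (by linarith) (hC k1))] at hk1
            exact lt_irrefl 0 hk1
          classical
          set S : Finset (Fin K) := Finset.univ.filter (fun k => 0 < C k ∧ t0 < c k) with hS
          have hSne : S.Nonempty := ⟨k1, by simp [hS, hk1C, hk1c]⟩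
          have hSC : ∀ k ∈ S, 0 < C k := fun k hk => ((Finset.mem_filter.mp hk).2).1
          have hSc : ∀ k ∈ S, t0 < c k := fun k hk => ((Finset.mem_filter.mp hk).2).2
          set s : ℝ := ∑ k ∈ S, (C k)⁻¹ with hs
          have hspos : 0 < s :=
            Finset.sum_pos (fun k hk => inv_pos.mpr (hSC k hk)) hSne
          have hθeq : θ = ∑ k ∈ S, (c k - t0) / C k := by
            rw [← hφt0]
            calc φ t0 = ∑ k, (if k ∈ S then (c k - t0) / C k else 0) := by
                  simp only [hφdef]
                  refine Finset.sum_congr rfl fun k _ => ?_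
                  by_cases hk : k ∈ S
                  · rw [if_pos (hSC k hk), if_pos hk,
                      max_eq_right (div_nonneg (by linarith [hSc k hk]) (hC k))]
                  · rw [if_neg hk]
                    by_cases hCk : 0 < C k
                    · have hck : c k ≤ t0 := by
                        by_contra h
                        exact hk (Finset.mem_filter.mpr
                          ⟨Finset.mem_univ k, hCk, lt_of_not_ge h⟩)
                      rw [if_pos hCk,
                        max_eq_left (div_nonpos_of_nonpos_of_nonneg (by linarith) (hC k))]
                    · rw [if_neg hCk]
              _ = ∑ k ∈ S, (c k - t0) / C k := by
                  rw [Finset.sum_ite_mem, Finset.univ_inter]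
          refine ⟨t0, (fun k => if k ∈ S then s⁻¹ * (C k)⁻¹ else 0), ?_, ?_, ?_,
            (fun k => if 0 < C k then max 0 ((c k - t0) / C k) else 0), ?_, hφt0, ?_⟩
          · intro k
            dsimp only
            by_cases hk : k ∈ S
            · rw [if_pos hk]
              have := hSC k hk
              positivity
            · rw [if_neg hk]
          · rw [Finset.sum_ite_mem, Finset.univ_inter, ← Finset.mul_sum, ← hs,
              inv_mul_cancel₀ (ne_of_gt hspos)]
          · have hsup : (⨆ k, (if k ∈ S then s⁻¹ * (C k)⁻¹ else 0) * C k) = s⁻¹ := by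
              refine fin_ciSup_eq _ _ (fun k => ?_) ⟨k1, ?_⟩
              · by_cases hk : k ∈ S
                · rw [if_pos hk, mul_assoc, inv_mul_cancel₀ (ne_of_gt (hSC k hk)), mul_one]
                · rw [if_neg hk, zero_mul]
                  positivity
              · have hk1S : k1 ∈ S := by simp [hS, hk1C, hk1c]
                rw [if_pos hk1S, mul_assoc, inv_mul_cancel₀ (ne_of_gt hk1C), mul_one]
            have hsumc : (∑ k, (if k ∈ S then s⁻¹ * (C k)⁻¹ else 0) * c k)
                = s⁻¹ * ∑ k ∈ S, c k / C k := by
              rw [Finset.mul_sum]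
              calc (∑ k, (if k ∈ S then s⁻¹ * (C k)⁻¹ else 0) * c k)
                  = ∑ k, (if k ∈ S then s⁻¹ * (c k / C k) else 0) := by
                    refine Finset.sum_congr rfl fun k _ => ?_
                    by_cases hk : k ∈ S
                    · rw [if_pos hk, if_pos hk, div_eq_mul_inv]; ring
                    · rw [if_neg hk, if_neg hk, zero_mul]
                _ = ∑ k ∈ S, s⁻¹ * (c k / C k) := by
                    rw [Finset.sum_ite_mem, Finset.univ_inter]
            have hkey : (∑ k ∈ S, c k / C k) - θ = t0 * s := by
              rw [hθeq, ← Finset.sum_sub_distrib, hs, Finset.mul_sum]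
              refine Finset.sum_congr rfl fun k hk => ?_
              rw [div_sub_div_same, show c k - (c k - t0) = t0 by ring, div_eq_mul_inv]
            rw [hsumc, hsup]
            calc s⁻¹ * (∑ k ∈ S, c k / C k) - θ * s⁻¹
                = s⁻¹ * ((∑ k ∈ S, c k / C k) - θ) := by ring
              _ = s⁻¹ * (t0 * s) := by rw [hkey]
              _ = t0 := by field_simp
          · intro k
            dsimp only
            by_cases h : 0 < C k <;> simp [h, le_max_left]
          · refine fin_ciSup_eq _ _ (fun k => ?_) ⟨k1, ?_⟩
            · dsimp only
              by_cases h : 0 < C k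
              · rw [if_pos h]
                by_cases hcv : c k ≤ t0
                · rw [max_eq_left (div_nonpos_of_nonpos_of_nonneg (by linarith) (hC k))]
                  simpa using hcv
                · push_neg at hcv
                  rw [max_eq_right (div_nonneg (by linarith) (hC k)),
                    div_mul_cancel₀ _ (ne_of_gt h)]
                  linarith
              · have hCk : C k = 0 := le_antisymm (not_lt.mp h) (hC k)
                simp only [hCk, mul_zero, sub_zero]
                exact le_of_lt (hB k hCk)
            · dsimp only
              rw [if_pos hk1C, max_eq_right (div_nonneg (by linarith) (hC k1)),
                div_mul_cancel₀ _ (ne_of_gt hk1C)]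
              ring
  refine ⟨v, ⟨⟨lam, hl0, hl1, hlv.symm⟩, ?_⟩, ⟨⟨γ, hg0, hgθ, hgv.symm⟩, ?_⟩⟩
  · rintro r ⟨lam', h0, h1, rfl⟩
    calc (∑ k, lam' k * c k) - θ * (⨆ k, lam' k * C k)
        ≤ ⨆ k, (c k - γ k * C k) := wd lam' γ h0 h1 hg0 hgθ
      _ = v := hgv
  · rintro r ⟨γ', h0, h1, rfl⟩
    calc v = (∑ k, lam k * c k) - θ * (⨆ k, lam k * C k) := hlv.symm
      _ ≤ ⨆ k, (c k - γ' k * C k) := wd lam γ' hl0 hl1 h0 h1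
end

section
/- Let K and τ be positive integers, D ∈ ℝ^{τ×K}, and d ∈ ℝ^τ. Consider the feasible set F = { (x, ξ¹, …, ξ^K) : Dx ≤ d, x ∈ [−1,1]^K, ξ^k ∈ [−1,1]^K for all k ∈ [K] } and objective max_{k∈[K]} | ξ^k_k x_k − 1 |, where ξ^k_k is the k-th coordinate of ξ^k. Then there exists a feasible point in F whose objective value equals 0 if and only if there exists x ∈ {−1, 1}^K with Dx ≤ d. -/
/-!
An objective value `0` forces `ξ^k_k x_k = 1` for every `k`; since both factors lie in `[-1, 1]`,
this pins `|x_k| = 1`, so `x` is a feasible point of the binary program. Conversely, a binary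
feasible `x` together with `ξ^k := x` attains objective `0`, because `x_k * x_k = 1`.
-/

theorem eq_one_or_eq_neg_one_of_mul_eq_one {α : Type*} [Ring α] [LinearOrder α]
    [IsStrictOrderedRing α] {a b : α} (ha : |a| ≤ 1) (hb : |b| ≤ 1) (hab : a * b = 1) :
    b = 1 ∨ b = -1 := by
  refine (abs_eq zero_le_one).mp (le_antisymm hb ?_)
  calc (1 : α) = |a| * |b| := by rw [← abs_mul, hab, abs_one]
    _ ≤ |b| := mul_le_of_le_one_left (abs_nonneg b) ha

theorem Real.iSup_abs_eq_zero_iff {ι : Type*} [Finite ι] (f : ι → ℝ) :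
    (⨆ i, |f i|) = 0 ↔ ∀ i, f i = 0 := by
  refine ⟨fun h i => abs_nonpos_iff.mp ?_, fun h => by simp [h]⟩
  exact (le_ciSup (Set.finite_range fun i => |f i|).bddAbove i).trans h.le

theorem sdfo_convex_np_hard_reduction_general {K τ : ℕ}
    (D : Matrix (Fin τ) (Fin K) ℝ) (d : Fin τ → ℝ) :
    (∃ (x : Fin K → ℝ) (ξ : Fin K → Fin K → ℝ),
        (∀ j, (∑ i, D j i * x i) ≤ d j) ∧ (∀ i, x i ∈ Set.Icc (-1 : ℝ) 1) ∧
        (∀ k i, ξ k i ∈ Set.Icc (-1 : ℝ) 1) ∧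
        (⨆ k : Fin K, |ξ k k * x k - 1|) = 0) ↔
      ∃ x : Fin K → ℝ, (∀ i, x i = 1 ∨ x i = -1) ∧
        ∀ j, (∑ i, D j i * x i) ≤ d j := by
  constructor
  · rintro ⟨x, ξ, hDx, hx, hξ, hsup⟩
    have hprod (k : Fin K) : ξ k k * x k = 1 :=
      sub_eq_zero.mp ((Real.iSup_abs_eq_zero_iff _).mp hsup k)
    exact ⟨x, fun k => eq_one_or_eq_neg_one_of_mul_eq_one
      (abs_le.mpr (hξ k k)) (abs_le.mpr (hx k)) (hprod k), hDx⟩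
  · rintro ⟨x, hx, hDx⟩
    have hx_abs (i : Fin K) : |x i| = 1 := (abs_eq zero_le_one).mpr (hx i)
    refine ⟨x, fun _ => x, hDx, fun i => abs_le.mp (hx_abs i).le,
      fun _ i => abs_le.mp (hx_abs i).le, (Real.iSup_abs_eq_zero_iff _).mpr fun k => ?_⟩
    rw [sub_eq_zero, mul_self_eq_one_iff]
    exact hx k

/-- NP-hardness reduction for sDFO with convex piecewise affine recourse and `ℓ₁`-ball
uncertainty: there is a feasible point `(x, ξ¹, …, ξ^K)` with `Dx ≤ d`,
`x ∈ [−1,1]^K`, `ξ^k ∈ [−1,1]^K`, whose objective `max_k |ξ^k_k x_k − 1|` equals `0`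
iff the binary program `{x ∈ {−1,1}^K : Dx ≤ d}` is feasible. -/
theorem sdfo_convex_np_hard_reduction {K τ : ℕ} (hK : 0 < K) (hτ : 0 < τ)
    (D : Matrix (Fin τ) (Fin K) ℝ) (d : Fin τ → ℝ) :
    (∃ (x : Fin K → ℝ) (ξ : Fin K → Fin K → ℝ),
        (∀ j, (∑ i, D j i * x i) ≤ d j) ∧ (∀ i, x i ∈ Set.Icc (-1 : ℝ) 1) ∧
        (∀ k i, ξ k i ∈ Set.Icc (-1 : ℝ) 1) ∧
        (⨆ k : Fin K, |ξ k k * x k - 1|) = 0) ↔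
      ∃ x : Fin K → ℝ, (∀ i, x i = 1 ∨ x i = -1) ∧
        ∀ j, (∑ i, D j i * x i) ≤ d j :=
  sdfo_convex_np_hard_reduction_general D d
end

section
/- Let X ⊆ ℝⁿ be a compact MICP-representable set, N a positive integer, and for each i ∈ [N] let Q_i : X → ℝ be an MICP-representable continuous function. Let P = { p ∈ ℝ^N : p ≥ 0, Dp ≤ d, Σ_{i∈[N]} p_i = 1 } be a nonempty polyhedral ambiguity set, where D ∈ ℝ^{ℓ×N} and d ∈ ℝ^ℓ. Then the function g : X → ℝ defined by g(x) = min_{p∈P} Σ_{i∈[N]} p_i Q_i(x) is MICP-representable; moreover, letting γ¹, …, γ^s denote the (finitely many) extreme points of P, one has min_{x∈X} g(x) = min_{j∈[s]} min_{x∈X} Σ_{i∈[N]} γ^j_i Q_i(x). -/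
def mixedIntegerProjection {E α β : Type*} (M : Set (E × (α → ℝ) × (β → ℝ))) : Set E :=
  {x | ∃ (y : α → ℝ) (z : β → ℝ), (∀ b, ∃ k : ℤ, z b = k) ∧ (x, y, z) ∈ M}

section MICPR

variable {E F : Type*} [AddCommGroup E] [Module ℝ E] [TopologicalSpace E]
  [AddCommGroup F] [Module ℝ F] [TopologicalSpace F]

theorem isMICPR_iff {S : Set E} :
    IsMICPR S ↔ ∃ (p d : ℕ) (M : Set (E × (Fin p → ℝ) × (Fin d → ℝ))),
      IsClosed M ∧ Convex ℝ M ∧ S = mixedIntegerProjection M := by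
  simp only [IsMICPR, Set.ext_iff, mixedIntegerProjection, Set.mem_ofPred_eq]

theorem IsMICPR.of_fintype_s14 {α β : Type*} [Fintype α] [Fintype β]
    {M : Set (E × (α → ℝ) × (β → ℝ))} (hMc : IsClosed M) (hMv : Convex ℝ M) :
    IsMICPR (mixedIntegerProjection M) := by
  let eα := Fintype.equivFin α
  let eβ := Fintype.equivFin β
  refine isMICPR_iff.2 ⟨_, _, (fun v => (v.1, fun a => v.2.1 (eα a), fun b => v.2.2 (eβ b))) ⁻¹' M,
    hMc.preimage (by fun_prop), hMv.is_linear_preimage ⟨fun _ _ => rfl, fun _ _ => rfl⟩, ?_⟩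
  ext x
  constructor
  · rintro ⟨y, z, hz, hM⟩
    exact ⟨y ∘ eα.symm, z ∘ eβ.symm, fun _ => hz _, by simpa [Function.comp_def] using hM⟩
  · rintro ⟨y, z, hz, hM⟩
    exact ⟨_, _, fun _ => hz _, hM⟩

theorem IsMICPR.of_isClosed_convex {S : Set E} (hc : IsClosed S) (hv : Convex ℝ S) :
    IsMICPR S :=
  isMICPR_iff.2 ⟨0, 0, Prod.fst ⁻¹' S, hc.preimage continuous_fst,
    hv.is_linear_preimage ⟨fun _ _ => rfl, fun _ _ => rfl⟩,
    by ext x; simp [mixedIntegerProjection]⟩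

theorem IsMICPR.preimage {S : Set F} (hS : IsMICPR S) (f : E →L[ℝ] F) : IsMICPR (f ⁻¹' S) := by
  obtain ⟨p, d, M, hMc, hMv, rfl⟩ := isMICPR_iff.1 hS
  refine isMICPR_iff.2 ⟨p, d, (fun v => (f v.1, v.2)) ⁻¹' M,
    hMc.preimage (by fun_prop), hMv.is_linear_preimage ⟨fun _ _ => by simp, fun _ _ => by simp⟩, ?_⟩
  rfl

theorem IsMICPR.iInter {ι : Type*} [Fintype ι] {S : ι → Set E} (hS : ∀ i, IsMICPR (S i)) :
    IsMICPR (⋂ i, S i) := by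
  choose p d M hMc hMv hSM using fun i => isMICPR_iff.1 (hS i)
  let slice : ∀ i, E × ((Σ i, Fin (p i)) → ℝ) × ((Σ i, Fin (d i)) → ℝ) →
      E × (Fin (p i) → ℝ) × (Fin (d i) → ℝ) :=
    fun i v => (v.1, fun k => v.2.1 ⟨i, k⟩, fun k => v.2.2 ⟨i, k⟩)
  have hslice : ∀ i, Continuous (slice i) := fun i => by fun_prop
  convert IsMICPR.of_fintype_s14 (isClosed_iInter fun i => (hMc i).preimage (hslice i))
    (convex_iInter fun i =>
      (hMv i).is_linear_preimage (f := slice i) ⟨fun _ _ => rfl, fun _ _ => rfl⟩)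
  ext x
  simp only [Set.mem_iInter, hSM, mixedIntegerProjection, Set.mem_ofPred_eq, Set.mem_preimage]
  constructor
  · intro h
    choose y z hz hM using h
    exact ⟨fun k => y k.1 k.2, fun k => z k.1 k.2, fun k => hz k.1 k.2, hM⟩
  · rintro ⟨y, z, hz, hM⟩ i
    exact ⟨_, _, fun k => hz _, hM i⟩

theorem IsMICPR.inter {S T : Set E} (hS : IsMICPR S) (hT : IsMICPR T) : IsMICPR (S ∩ T) := by
  rw [Set.inter_eq_iInter]
  exact IsMICPR.iInter fun b => by cases b <;> assumption

theorem IsMICPR.mixedIntegerProjection {α β : Type*} [Fintype α] [Fintype β]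
    {S : Set (E × (α → ℝ) × (β → ℝ))} (hS : IsMICPR S) :
    IsMICPR (mixedIntegerProjection S) := by
  obtain ⟨p, d, M, hMc, hMv, rfl⟩ := isMICPR_iff.1 hS
  let split : E × (α ⊕ Fin p → ℝ) × (β ⊕ Fin d → ℝ) →
      (E × (α → ℝ) × (β → ℝ)) × (Fin p → ℝ) × (Fin d → ℝ) :=
    fun v => ((v.1, fun a => v.2.1 (.inl a), fun b => v.2.2 (.inl b)),
      fun k => v.2.1 (.inr k), fun k => v.2.2 (.inr k))
  convert IsMICPR.of_fintype_s14 (hMc.preimage (show Continuous split by fun_prop))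
    (hMv.is_linear_preimage (f := split) ⟨fun _ _ => rfl, fun _ _ => rfl⟩)
  ext x
  simp only [_root_.mixedIntegerProjection, Set.mem_ofPred_eq, Set.mem_preimage]
  constructor
  · rintro ⟨y, z, hz, y', z', hz', hM⟩
    refine ⟨Sum.elim y y', Sum.elim z z', ?_, hM⟩
    rintro (b | k)
    exacts [hz b, hz' k]
  · rintro ⟨y, z, hz, hM⟩
    exact ⟨_, _, fun _ => hz _, _, _, fun _ => hz _, hM⟩

end MICPR

theorem IsCompact.exists_mem_extremePoints_isMinOn {E : Type*} [AddCommGroup E] [Module ℝ E]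
    [TopologicalSpace E] [T2Space E] [IsTopologicalAddGroup E] [ContinuousSMul ℝ E]
    [LocallyConvexSpace ℝ E] {s : Set E} (hs : IsCompact s) (hne : s.Nonempty) (l : E →L[ℝ] ℝ) :
    ∃ x ∈ s.extremePoints ℝ, IsMinOn l s x := by
  have hexp : IsExposed ℝ s {x ∈ s | ∀ y ∈ s, l x ≤ l y} := fun _ => ⟨-l, by simp⟩
  obtain ⟨z, hz, hzmin⟩ := hs.exists_isMinOn hne l.continuous.continuousOn
  obtain ⟨x, hx⟩ := (hexp.isCompact hs).extremePoints_nonempty ⟨z, hz, hzmin⟩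
  exact ⟨x, hexp.isExtreme.extremePoints_subset_extremePoints hx, hx.1.2⟩

theorem isCompact_stdSimplex_inter_halfSpaces {ι m : Type*} [Fintype ι] (D : Matrix m ι ℝ)
    (d : m → ℝ) :
    IsCompact {p : ι → ℝ | (∀ i, 0 ≤ p i) ∧ (∀ j, ∑ i, D j i * p i ≤ d j) ∧ ∑ i, p i = 1} := by
  have hclosed : IsClosed {p : ι → ℝ | ∀ j, ∑ i, D j i * p i ≤ d j} := by
    simp only [Set.ofPred_forall]
    exact isClosed_iInter fun j => isClosed_le (by fun_prop) continuous_const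
  convert (isCompact_stdSimplex ℝ ι).inter_right hclosed using 1
  ext p
  simp only [stdSimplex, Set.mem_inter_iff, Set.mem_ofPred_eq]
  tauto

theorem IsMinOn.sInf_eq {α : Type*} {f : α → ℝ} {s : Set α} {a : α} (ha : a ∈ s)
    (h : IsMinOn f s a) : sInf {r | ∃ x ∈ s, r = f x} = f a :=
  IsLeast.csInf_eq ⟨⟨a, ha, rfl⟩, by rintro _ ⟨x, hx, rfl⟩; exact h hx⟩

theorem exists_one_le_of_isInt_of_one_le_sum {κ : Type*} [Fintype κ] {w : κ → ℝ}
    (hw : ∀ j, ∃ k : ℤ, w j = k) (h : 1 ≤ ∑ j, w j) : ∃ j, 1 ≤ w j := by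
  by_contra! hlt
  have hnonpos : ∀ j, w j ≤ 0 := fun j => by
    obtain ⟨k, hk⟩ := hw j
    have : k < 1 := by exact_mod_cast hk ▸ hlt j
    rw [hk]; exact_mod_cast Int.lt_add_one_iff.1 this
  linarith [Finset.sum_nonpos fun j (_ : j ∈ Finset.univ) => hnonpos j]

theorem exists_isMinOn_sum_mul {ι κ : Type*} [Fintype ι] {P : Set (ι → ℝ)} (hPc : IsCompact P)
    (hPne : P.Nonempty) {γ : κ → ι → ℝ} (hγ : Set.range γ = P.extremePoints ℝ) (c : ι → ℝ) :
    ∃ j, IsMinOn (fun p => ∑ i, p i * c i) P (γ j) := by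
  let l : (ι → ℝ) →L[ℝ] ℝ := ∑ i, c i • ContinuousLinearMap.proj i
  have hl : ∀ p, l p = ∑ i, p i * c i := fun p => by simp [l, mul_comm]
  obtain ⟨x, hx, hmin⟩ := hPc.exists_mem_extremePoints_isMinOn hPne l
  obtain ⟨j, rfl⟩ := hγ ▸ hx
  exact ⟨j, by simpa only [isMinOn_iff, hl] using hmin⟩

theorem IsCompact.exists_forall_abs_le_of_continuousOn {α κ : Type*} [TopologicalSpace α]
    [Finite κ] {X : Set α} (hX : IsCompact X) {f : κ → α → ℝ} (hf : ∀ j, ContinuousOn (f j) X) :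
    ∃ C, ∀ j, ∀ x ∈ X, |f j x| ≤ C := by
  have := Fintype.ofFinite κ
  obtain ⟨C, hC⟩ := hX.exists_bound_of_continuousOn (f := fun x j => f j x) (continuousOn_pi.2 hf)
  exact ⟨C, fun j x hx => (norm_le_pi_norm (fun j => f j x) j).trans (hC x hx)⟩

section BigM

variable {E ι κ : Type*} [Fintype ι] [Fintype κ]

/-- In the variables `((x, t), τ, w)`, `τ` bounds `Q x` from above and the integer vector `w`
selects some `j` with `w j ≥ 1`, whose constraint then reads `∑ᵢ γ j i * τ i ≤ t`. When
`|∑ᵢ γ j i * Q i x| ≤ C` for all `j`, a one-hot `w` leaves all other constraints slack. -/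
def bigMModel (X : Set E) (Q : ι → E → ℝ) (γ : κ → ι → ℝ) (C : ℝ) :
    Set ((E × ℝ) × (ι → ℝ) × (κ → ℝ)) :=
  {v | v.1.1 ∈ X ∧ (∀ i, Q i v.1.1 ≤ v.2.1 i) ∧
    (∀ j, ∑ i, γ j i * v.2.1 i ≤ v.1.2 + 2 * C * (1 - v.2.2 j)) ∧ 1 ≤ ∑ j, v.2.2 j}

theorem mixedIntegerProjection_bigMModel {X : Set E} {Q : ι → E → ℝ} {γ : κ → ι → ℝ}
    (hγ : ∀ j i, 0 ≤ γ j i) {C : ℝ} (hC : ∀ j, ∀ x ∈ X, |∑ i, γ j i * Q i x| ≤ C) :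
    mixedIntegerProjection (bigMModel X Q γ C) =
      {xt | xt.1 ∈ X ∧ ∃ j, ∑ i, γ j i * Q i xt.1 ≤ xt.2} := by
  classical
  ext ⟨x, t⟩
  constructor
  · rintro ⟨τ, w, hw, hx, hQτ, hbigM, hsum⟩
    obtain ⟨j, hj⟩ := exists_one_le_of_isInt_of_one_le_sum hw hsum
    have hC0 : 0 ≤ C := (abs_nonneg _).trans (hC j x hx)
    refine ⟨hx, j, ?_⟩
    calc ∑ i, γ j i * Q i x ≤ ∑ i, γ j i * τ i :=
          Finset.sum_le_sum fun i _ => mul_le_mul_of_nonneg_left (hQτ i) (hγ j i)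
      _ ≤ t + 2 * C * (1 - w j) := hbigM j
      _ ≤ t := by nlinarith
  · rintro ⟨hx, j₀, hj₀⟩
    refine ⟨fun i => Q i x, Pi.single j₀ 1, fun j => ?_, hx, fun i => le_rfl, fun j => ?_, by simp⟩
    · rcases eq_or_ne j j₀ with rfl | hj
      exacts [⟨1, by simp⟩, ⟨0, by simp [hj]⟩]
    · rcases eq_or_ne j j₀ with rfl | hj
      · simpa using hj₀
      · have hup := (abs_le.1 (hC j x hx)).2
        have hlow := (abs_le.1 (hC j₀ x hx)).1
        simp only [Pi.single_eq_of_ne hj]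
        linarith

variable [AddCommGroup E] [Module ℝ E] [TopologicalSpace E]

theorem isMICPR_bigMModel {X : Set E} {Q : ι → E → ℝ} (γ : κ → ι → ℝ) (C : ℝ) (hX : IsMICPR X)
    (hQ : ∀ i, IsMICPR {xt : E × ℝ | xt.1 ∈ X ∧ Q i xt.1 ≤ xt.2}) :
    IsMICPR (bigMModel X Q γ C) := by
  let x : (E × ℝ) × (ι → ℝ) × (κ → ℝ) →L[ℝ] E := .comp (.fst ℝ E ℝ) (.fst ℝ _ _)
  let xτ (i : ι) : (E × ℝ) × (ι → ℝ) × (κ → ℝ) →L[ℝ] E × ℝ :=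
    x.prod (.comp (.proj i) (.comp (.fst ℝ _ _) (.snd ℝ _ _)))
  have hK : IsMICPR {v : (E × ℝ) × (ι → ℝ) × (κ → ℝ) |
      (∀ j, ∑ i, γ j i * v.2.1 i ≤ v.1.2 + 2 * C * (1 - v.2.2 j)) ∧ 1 ≤ ∑ j, v.2.2 j} := by
    refine IsMICPR.of_isClosed_convex ?_ ?_
    · simp only [Set.ofPred_and, Set.ofPred_forall]
      refine (isClosed_iInter fun j => isClosed_le ?_ ?_).inter (isClosed_le ?_ ?_) <;> fun_prop
    · rintro v ⟨hv, hv1⟩ w ⟨hw, hw1⟩ a b ha hb hab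
      obtain rfl : b = 1 - a := by linarith
      simp only [Set.mem_ofPred_eq, Prod.fst_add, Prod.snd_add, Prod.smul_fst, Prod.smul_snd,
        Pi.add_apply, Pi.smul_apply, smul_eq_mul, Finset.sum_add_distrib, mul_add,
        mul_left_comm _ a, mul_left_comm _ (1 - a), ← Finset.mul_sum]
      refine ⟨fun j => ?_, ?_⟩
      · nlinarith [mul_le_mul_of_nonneg_left (hv j) ha, mul_le_mul_of_nonneg_left (hw j) hb]
      · nlinarith
  convert (hX.preimage x).inter ((IsMICPR.iInter fun i => (hQ i).preimage (xτ i)).inter hK)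
    using 1
  ext v
  simp only [Set.mem_inter_iff, Set.mem_iInter]
  exact ⟨fun ⟨hx, hQτ, hK⟩ => ⟨hx, fun i => ⟨hx, hQτ i⟩, hK⟩,
    fun ⟨hx, hQτ, hK⟩ => ⟨hx, fun i => (hQτ i).2, hK⟩⟩

end BigM

theorem dfo_finite_support_polyhedral_micpr_general {n N l s : ℕ}
    (X : Set (Fin n → ℝ)) (hXc : IsCompact X) (hX : IsMICPR X)
    (Q : Fin N → (Fin n → ℝ) → ℝ)
    (hQcont : ∀ i, ContinuousOn (Q i) X)
    (hQmicp : ∀ i, IsMICPR {xt : (Fin n → ℝ) × ℝ | xt.1 ∈ X ∧ Q i xt.1 ≤ xt.2})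
    (D : Matrix (Fin l) (Fin N) ℝ) (d : Fin l → ℝ)
    (P : Set (Fin N → ℝ))
    (hP : P = {p | (∀ i, 0 ≤ p i) ∧ (∀ j, (∑ i, D j i * p i) ≤ d j) ∧ (∑ i, p i) = 1})
    (hPne : P.Nonempty)
    (γ : Fin s → (Fin N → ℝ)) (hγ : Set.range γ = Set.extremePoints ℝ P) :
    let g : (Fin n → ℝ) → ℝ := fun x => sInf {r : ℝ | ∃ p ∈ P, r = ∑ i, p i * Q i x}
    IsMICPR {xt : (Fin n → ℝ) × ℝ | xt.1 ∈ X ∧ g xt.1 ≤ xt.2} ∧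
      sInf {r : ℝ | ∃ x ∈ X, r = g x} =
        sInf {r : ℝ | ∃ j : Fin s, ∃ x ∈ X, r = ∑ i, γ j i * Q i x} := by
  intro g
  have hγP : ∀ j, γ j ∈ P := fun j => extremePoints_subset (hγ ▸ Set.mem_range_self j)
  have hγ0 : ∀ j i, 0 ≤ γ j i := fun j i => (hP ▸ hγP j).1 i
  have hg : ∀ x, ∃ j₀, g x = ∑ i, γ j₀ i * Q i x ∧ ∀ j, g x ≤ ∑ i, γ j i * Q i x := fun x => by
    obtain ⟨j₀, hmin⟩ := exists_isMinOn_sum_mul (hP ▸ isCompact_stdSimplex_inter_halfSpaces D d)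
      hPne hγ fun i => Q i x
    have hgx : g x = ∑ i, γ j₀ i * Q i x := hmin.sInf_eq (hγP j₀)
    exact ⟨j₀, hgx, fun j => hgx ▸ hmin (hγP j)⟩
  have hepi : {xt : (Fin n → ℝ) × ℝ | xt.1 ∈ X ∧ g xt.1 ≤ xt.2} =
      {xt | xt.1 ∈ X ∧ ∃ j, ∑ i, γ j i * Q i xt.1 ≤ xt.2} := by
    ext ⟨x, t⟩
    obtain ⟨j₀, hj₀, hmin⟩ := hg x
    exact and_congr_right fun _ => ⟨fun h => ⟨j₀, hj₀ ▸ h⟩, fun ⟨j, hj⟩ => (hmin j).trans hj⟩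
  obtain ⟨C, hC⟩ := hXc.exists_forall_abs_le_of_continuousOn
    (f := fun j x => ∑ i, γ j i * Q i x) fun j =>
      continuousOn_finsetSum _ fun i _ => continuousOn_const.mul (hQcont i)
  refine ⟨?_, csInf_eq_csInf_of_forall_exists_le ?_ ?_⟩
  · rw [hepi, ← mixedIntegerProjection_bigMModel hγ0 hC]
    exact (isMICPR_bigMModel γ C hX hQmicp).mixedIntegerProjection
  · rintro _ ⟨x, hx, rfl⟩
    obtain ⟨j₀, hj₀, -⟩ := hg x
    exact ⟨_, ⟨j₀, x, hx, hj₀⟩, le_rfl⟩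
  · rintro _ ⟨j, x, hx, rfl⟩
    obtain ⟨-, -, hmin⟩ := hg x
    exact ⟨g x, ⟨x, hx, rfl⟩, hmin j⟩

/-- DFO over a polyhedral ambiguity set with finite support: if `X` is compact and
MICP-R and each `Q_i` is a continuous MICP-R function on `X`, then
`g(x) = min_{p∈P} ∑ᵢ pᵢ Q_i(x)` is MICP-R (its epigraph is MICP-R), and, with
`γ¹, …, γ^s` the extreme points of the polytope `P`,
`min_{x∈X} g(x) = min_{j∈[s]} min_{x∈X} ∑ᵢ γʲᵢ Q_i(x)`. -/
theorem dfo_finite_support_polyhedral_micpr {n N l s : ℕ} (hN : 0 < N)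
    (X : Set (Fin n → ℝ)) (hXc : IsCompact X) (hX : IsMICPR X)
    (Q : Fin N → (Fin n → ℝ) → ℝ)
    (hQcont : ∀ i, ContinuousOn (Q i) X)
    (hQmicp : ∀ i, IsMICPR {xt : (Fin n → ℝ) × ℝ | xt.1 ∈ X ∧ Q i xt.1 ≤ xt.2})
    (D : Matrix (Fin l) (Fin N) ℝ) (d : Fin l → ℝ)
    (P : Set (Fin N → ℝ))
    (hP : P = {p | (∀ i, 0 ≤ p i) ∧ (∀ j, (∑ i, D j i * p i) ≤ d j) ∧ (∑ i, p i) = 1})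
    (hPne : P.Nonempty)
    (γ : Fin s → (Fin N → ℝ)) (hγ : Set.range γ = Set.extremePoints ℝ P) :
    let g : (Fin n → ℝ) → ℝ := fun x => sInf {r : ℝ | ∃ p ∈ P, r = ∑ i, p i * Q i x}
    IsMICPR {xt : (Fin n → ℝ) × ℝ | xt.1 ∈ X ∧ g xt.1 ≤ xt.2} ∧
      sInf {r : ℝ | ∃ x ∈ X, r = g x} =
        sInf {r : ℝ | ∃ j : Fin s, ∃ x ∈ X, r = ∑ i, γ j i * Q i x} :=
  dfo_finite_support_polyhedral_micpr_general X hXc hX Q hQcont hQmicp D d P hP hPne γ hγ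
end

section
/- Let N ≥ 2 be an integer and let θ satisfy 0 < θ ≤ √(1/(N(N−1))). For every x ∈ ℝ^N, writing x̄ = (1/N) Σ_{i∈[N]} x_i and e for the all-ones vector, min { Σ_{i∈[N]} p_i x_i : p ∈ ℝ^N, p ≥ 0, Σ_{i∈[N]} p_i = 1, ‖p − (1/N)e‖₂ ≤ θ } = x̄ − θ ‖x − x̄ e‖₂, and the minimum is attained. -/
/-- The inner infimum of DFO over the Euclidean-ball ambiguity set
`P = {p ≥ 0 : ∑ᵢ pᵢ = 1, ‖p − e/N‖₂ ≤ θ}` with `0 < θ ≤ √(1/(N(N−1)))`: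
`min_{p∈P} ∑ᵢ pᵢ xᵢ = x̄ − θ‖x − x̄e‖₂` where `x̄ = (1/N)∑ᵢ xᵢ`, and the minimum
is attained. -/
theorem euclidean_ball_ambiguity_inner_min {N : ℕ} (hN : 2 ≤ N) (θ : ℝ)
    (hθ0 : 0 < θ) (hθ : θ ≤ Real.sqrt (1 / ((N : ℝ) * ((N : ℝ) - 1))))
    (x : Fin N → ℝ) :
    IsLeast {r : ℝ | ∃ p : Fin N → ℝ, (∀ i, 0 ≤ p i) ∧ (∑ i, p i) = 1 ∧
        Real.sqrt (∑ i, (p i - 1 / (N : ℝ)) ^ 2) ≤ θ ∧ r = ∑ i, p i * x i}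
      ((1 / (N : ℝ)) * (∑ i, x i) -
        θ * Real.sqrt (∑ i, (x i - (1 / (N : ℝ)) * ∑ j, x j) ^ 2)) := by
  have hN1 : (1:ℝ) ≤ (N:ℝ) - 1 := by
    have : (2:ℝ) ≤ N := by exact_mod_cast hN
    linarith
  have hN0 : (0:ℝ) < N := by linarith
  set xb : ℝ := (1 / (N : ℝ)) * ∑ j, x j with hxb
  set d : Fin N → ℝ := fun i => x i - xb with hd
  have hsum_d : ∑ i, d i = 0 := by
    simp only [hd, Finset.sum_sub_distrib, Finset.sum_const, Finset.card_univ,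
      Fintype.card_fin, nsmul_eq_mul, hxb]
    field_simp
    ring
  set S : ℝ := ∑ i, d i ^ 2 with hS
  have hS0 : 0 ≤ S := Finset.sum_nonneg fun i _ => sq_nonneg _
  set s : ℝ := Real.sqrt S with hs
  have hs0 : 0 ≤ s := Real.sqrt_nonneg _
  have hs2 : s ^ 2 = S := Real.sq_sqrt hS0
  have hθ2 : θ ^ 2 ≤ 1 / ((N:ℝ) * ((N:ℝ) - 1)) := by
    have h := Real.sq_sqrt (by positivity : (0:ℝ) ≤ 1 / ((N : ℝ) * ((N : ℝ) - 1)))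
    calc θ ^ 2 ≤ Real.sqrt (1 / ((N : ℝ) * ((N : ℝ) - 1))) ^ 2 :=
          pow_le_pow_left₀ hθ0.le hθ 2
      _ = _ := h
  have hSi : ∀ i, d i ^ 2 ≤ S := by
    intro i
    have h0 : (0:ℝ) ≤ ∑ j ∈ Finset.univ.erase i, d j ^ 2 :=
      Finset.sum_nonneg fun j _ => sq_nonneg _
    have ht := Finset.sum_erase_add Finset.univ (fun j => d j ^ 2) (Finset.mem_univ i)
    rw [hS]; linarith
  -- key bound: for each i, N * d i ^ 2 ≤ (N - 1) * S
  have hkey : ∀ i, (N:ℝ) * d i ^ 2 ≤ ((N:ℝ) - 1) * S := by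
    intro i
    have hcs := Finset.sum_mul_sq_le_sq_mul_sq (Finset.univ.erase i) d (fun _ => (1:ℝ))
    have h1 : ∑ j ∈ Finset.univ.erase i, d j = - d i := by
      have ht := Finset.sum_erase_add Finset.univ d (Finset.mem_univ i)
      linarith [hsum_d, ht]
    have h2 : ∑ j ∈ Finset.univ.erase i, d j ^ 2 = S - d i ^ 2 := by
      have ht := Finset.sum_erase_add Finset.univ (fun j => d j ^ 2) (Finset.mem_univ i)
      rw [hS]; linarith
    have hcard : ((Finset.univ.erase i).card : ℝ) = (N:ℝ) - 1 := by
      rw [Finset.card_erase_of_mem (Finset.mem_univ i), Finset.card_univ, Fintype.card_fin,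
        Nat.cast_sub (by omega : 1 ≤ N), Nat.cast_one]
    simp only [mul_one, one_pow, Finset.sum_const, nsmul_eq_mul, mul_one, h1, h2, neg_sq]
      at hcs
    rw [hcard] at hcs
    nlinarith [sq_nonneg (d i)]
  constructor
  · -- membership
    by_cases hSz : S = 0
    · refine ⟨fun _ => 1 / (N:ℝ), fun i => by positivity, ?_, ?_, ?_⟩
      · simp only [Finset.sum_const, Finset.card_univ, Fintype.card_fin, nsmul_eq_mul]
        field_simp
      · simp only [sub_self]
        simpa using hθ0.le
      · have hsz : s = 0 := by rw [hs, hSz, Real.sqrt_zero]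
        rw [hsz, mul_zero, sub_zero, hxb, Finset.mul_sum]
    · have hSpos : 0 < S := lt_of_le_of_ne hS0 (Ne.symm hSz)
      have hspos : 0 < s := Real.sqrt_pos.mpr hSpos
      refine ⟨fun i => 1 / (N:ℝ) - θ * d i / s, ?_, ?_, ?_, ?_⟩
      · intro i
        have hb : θ * d i ≤ s / N := by
          have habs : (θ * d i) ^ 2 ≤ (s / N) ^ 2 := by
            have hmu : θ ^ 2 * d i ^ 2
                ≤ (1 / ((N:ℝ) * ((N:ℝ) - 1))) * (((N:ℝ) - 1) / N * S) := by
              apply mul_le_mul hθ2 _ (sq_nonneg _) (by positivity)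
              have := hkey i
              rw [div_mul_eq_mul_div, le_div_iff₀ hN0]
              linarith
            calc (θ * d i) ^ 2 = θ ^ 2 * d i ^ 2 := by ring
              _ ≤ (1 / ((N:ℝ) * ((N:ℝ) - 1))) * (((N:ℝ) - 1) / N * S) := hmu
              _ = S / N ^ 2 := by field_simp
              _ = (s / N) ^ 2 := by rw [div_pow, hs2]
          have h := Real.sqrt_le_sqrt habs
          rw [Real.sqrt_sq_eq_abs, Real.sqrt_sq (by positivity)] at h
          exact (le_abs_self _).trans h
        rw [sub_nonneg, div_le_iff₀ hspos]
        calc θ * d i ≤ s / N := hb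
          _ = 1 / N * s := by ring
      · rw [Finset.sum_sub_distrib]
        rw [show (∑ i : Fin N, θ * d i / s) = (θ / s) * ∑ i, d i by
          rw [Finset.mul_sum]; apply Finset.sum_congr rfl; intros; ring]
        rw [hsum_d, mul_zero, sub_zero, Finset.sum_const, Finset.card_univ, Fintype.card_fin,
          nsmul_eq_mul]
        field_simp
      · have hc : ∀ i, ((1 / (N:ℝ) - θ * d i / s) - 1 / N) ^ 2 = θ^2 / s^2 * d i ^ 2 := by
          intro i; field_simp; ring
        rw [Finset.sum_congr rfl fun i _ => hc i, ← Finset.mul_sum, ← hS, hs2,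
          div_mul_eq_mul_div, mul_div_assoc, div_self hSz, mul_one, Real.sqrt_sq hθ0.le]
      · have expand : ∑ i, (1 / (N:ℝ) - θ * d i / s) * x i
            = (1/(N:ℝ)) * ∑ i, x i - (θ / s) * ∑ i, d i * x i := by
          rw [Finset.mul_sum, Finset.mul_sum, ← Finset.sum_sub_distrib]
          apply Finset.sum_congr rfl; intro i _; ring
        rw [expand]
        have hdx : ∑ i, d i * x i = S := by
          have hc : ∀ i, d i * x i = d i ^ 2 + xb * d i := by
            intro i
            have : x i = d i + xb := by simp [hd]
            rw [this]; ring
          rw [Finset.sum_congr rfl fun i _ => hc i, Finset.sum_add_distrib,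
            ← Finset.mul_sum, hsum_d, mul_zero, add_zero, ← hS]
        rw [hdx, ← hxb, ← hs2]
        field_simp
  · -- lower bound
    rintro r ⟨p, hp0, hp1, hpθ, rfl⟩
    have hcs := Real.sum_mul_le_sqrt_mul_sqrt Finset.univ (fun i => -(p i - 1/(N:ℝ))) d
    have hq : Real.sqrt (∑ i, (-(p i - 1/(N:ℝ))) ^ 2) ≤ θ := by
      calc Real.sqrt (∑ i, (-(p i - 1/(N:ℝ))) ^ 2)
          = Real.sqrt (∑ i, (p i - 1/(N:ℝ)) ^ 2) := by
            congr 1; apply Finset.sum_congr rfl; intros; rw [neg_sq]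
        _ ≤ θ := hpθ
    have hcs2 : ∑ i, -(p i - 1/(N:ℝ)) * d i ≤ θ * s := by
      calc ∑ i, -(p i - 1/(N:ℝ)) * d i
          ≤ Real.sqrt (∑ i, (-(p i - 1/(N:ℝ))) ^ 2) * Real.sqrt (∑ i, d i ^ 2) := hcs
        _ ≤ θ * s := by
            rw [← hS, ← hs]
            exact mul_le_mul hq le_rfl hs0 hθ0.le
    have hval : ∑ i, p i * x i = xb + ∑ i, (p i - 1/(N:ℝ)) * d i := by
      have hc : ∀ i, p i * x i = p i * xb + (p i - 1/(N:ℝ)) * d i + (1/(N:ℝ)) * d i := by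
        intro i; simp only [hd]; ring
      rw [Finset.sum_congr rfl fun i _ => hc i]
      rw [Finset.sum_add_distrib, Finset.sum_add_distrib, ← Finset.sum_mul, hp1,
        ← Finset.mul_sum, hsum_d, mul_zero, add_zero, one_mul]
    rw [hval]
    have hneg : ∑ i, -(p i - 1/(N:ℝ)) * d i = -(∑ i, (p i - 1/(N:ℝ)) * d i) := by
      rw [← Finset.sum_neg_distrib]
      apply Finset.sum_congr rfl; intros; ring
    rw [hneg] at hcs2
    linarith
end

section
/- Let X ⊆ ℝⁿ be a nonempty compact convex set, m a positive integer, a(x) = Âx + â ∈ ℝ^m and b(x) = B̂ᵀx + b̂ ∈ ℝ affine maps, ξ⁰ ∈ ℝ^m, and θ ≥ 0. Then the epigraph { (x, t) ∈ ℝⁿ × ℝ : x ∈ X, (ξ⁰)ᵀ a(x) + b(x) − θ ‖a(x)‖₁ ≤ t } is MICP-representable. -/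
/-!
For `|u| ≤ L`, the big-M constraints `w ≤ u + 2L(1 - z)` and `w ≤ -u + 2Lz` with `z ∈ {0, 1}`
hold for some `z` exactly when `w ≤ |u|`. As `θ ≥ 0`, `ξᵀu + s - θ‖u‖₁ ≤ t` holds iff
`ξᵀu + s ≤ t + θ ∑ⱼ wⱼ` for some `w ≤ |u|`, so on the box `‖u‖∞ ≤ L` the epigraph is the
projection of a polyhedron in `(u, s, t, w, z)` with `z` integral. Since `X` is compact,
`a(x) = Âx + â` is bounded on `X`, and the theorem follows by pulling this representation back
along the affine map `(x, t) ↦ (a(x), b(x), t)` and intersecting with the closed convex `X × ℝ`.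
-/

open Matrix

theorem IsMICPR.inter_preimage {E F : Type*} [AddCommGroup E] [Module ℝ E] [TopologicalSpace E]
    [AddCommGroup F] [Module ℝ F] [TopologicalSpace F] {S : Set F} (hS : IsMICPR S)
    {C : Set E} (hCc : IsClosed C) (hCv : Convex ℝ C) (Φ : E →ᴬ[ℝ] F) :
    IsMICPR (C ∩ Φ ⁻¹' S) := by
  obtain ⟨p, d, M, hMc, hMv, hM⟩ := hS
  refine ⟨p, d, {q | q.1 ∈ C ∧ (Φ q.1, q.2) ∈ M}, ?_, ?_, fun x => ?_⟩
  · exact (hCc.preimage continuous_fst).inter (hMc.preimage (by fun_prop))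
  · rintro ⟨x₁, r₁⟩ ⟨hx₁, hr₁⟩ ⟨x₂, r₂⟩ ⟨hx₂, hr₂⟩ a b ha hb hab
    refine ⟨hCv hx₁ hx₂ ha hb hab, ?_⟩
    have hΦ : Φ (a • x₁ + b • x₂) = a • Φ x₁ + b • Φ x₂ :=
      Convex.combo_affine_apply (f := (Φ : E →ᵃ[ℝ] F)) hab
    simpa [hΦ] using hMv hr₁ hr₂ ha hb hab
  · simp only [Set.mem_inter_iff, Set.mem_preimage, hM, Set.mem_ofPred_eq]
    tauto

theorem le_abs_iff_exists_int_bigM {u w L : ℝ} (hu : |u| ≤ L) :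
    w ≤ |u| ↔
      ∃ k : ℤ, 0 ≤ (k : ℝ) ∧ (k : ℝ) ≤ 1 ∧ w ≤ u + 2 * L * (1 - k) ∧ w ≤ -u + 2 * L * k := by
  constructor
  · intro hw
    rcases le_or_gt 0 u with hu0 | hu0
    · rw [abs_of_nonneg hu0] at hu hw
      exact ⟨1, by norm_num, by norm_num, by push_cast; linarith, by push_cast; linarith⟩
    · rw [abs_of_neg hu0] at hu hw
      exact ⟨0, by norm_num, by norm_num, by push_cast; linarith, by push_cast; linarith⟩
  · rintro ⟨k, hk0, hk1, h₁, h₂⟩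
    obtain rfl | rfl : k = 0 ∨ k = 1 := by
      have : 0 ≤ k ∧ k ≤ 1 := ⟨by exact_mod_cast hk0, by exact_mod_cast hk1⟩
      omega
    · push_cast at h₂; linarith [neg_le_abs u]
    · push_cast at h₁; linarith [le_abs_self u]

section

variable {m : ℕ} (ξ : Fin m → ℝ) (θ L : ℝ)

def boundedReverseL1Epigraph : Set ((Fin m → ℝ) × ℝ × ℝ) :=
  {v | ‖v.1‖ ≤ L ∧ ξ ⬝ᵥ v.1 + v.2.1 - θ * ∑ j, |v.1 j| ≤ v.2.2}

def reverseL1BigM : Set (((Fin m → ℝ) × ℝ × ℝ) × (Fin m → ℝ) × (Fin m → ℝ)) :=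
  {q | ‖q.1.1‖ ≤ L ∧ ξ ⬝ᵥ q.1.1 + q.1.2.1 ≤ q.1.2.2 + θ * ∑ j, q.2.1 j ∧
    ∀ j, 0 ≤ q.2.2 j ∧ q.2.2 j ≤ 1 ∧ q.2.1 j ≤ q.1.1 j + 2 * L * (1 - q.2.2 j) ∧
      q.2.1 j ≤ -q.1.1 j + 2 * L * q.2.2 j}

theorem isClosed_reverseL1BigM : IsClosed (reverseL1BigM ξ θ L) := by
  simp only [reverseL1BigM, Set.ofPred_and, Set.ofPred_forall]
  refine (isClosed_le (by fun_prop) continuous_const).inter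
    ((isClosed_le (by fun_prop) (by fun_prop)).inter (isClosed_iInter fun j => ?_))
  exact (isClosed_le (by fun_prop) (by fun_prop)).inter <|
    (isClosed_le (by fun_prop) (by fun_prop)).inter <|
    (isClosed_le (by fun_prop) (by fun_prop)).inter (isClosed_le (by fun_prop) (by fun_prop))

theorem convex_reverseL1BigM : Convex ℝ (reverseL1BigM ξ θ L) := by
  rintro ⟨⟨u₁, s₁, t₁⟩, w₁, z₁⟩ ⟨hu₁, h₁, hj₁⟩ ⟨⟨u₂, s₂, t₂⟩, w₂, z₂⟩ ⟨hu₂, h₂, hj₂⟩ a b ha hb hab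
  have combo {x₁ y₁ x₂ y₂ : ℝ} (h₁ : x₁ ≤ y₁) (h₂ : x₂ ≤ y₂) :
      a * x₁ + b * x₂ ≤ a * y₁ + b * y₂ :=
    add_le_add (mul_le_mul_of_nonneg_left h₁ ha) (mul_le_mul_of_nonneg_left h₂ hb)
  refine ⟨?_, ?_, fun j => ?_⟩
  · simpa using
      convex_closedBall (0 : Fin m → ℝ) L (by simpa using hu₁) (by simpa using hu₂) ha hb hab
  · simp only [Prod.smul_mk, Prod.mk_add_mk, dotProduct_add, dotProduct_smul, smul_eq_mul,
      Pi.add_apply, Pi.smul_apply, Finset.sum_add_distrib, ← Finset.mul_sum]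
    linear_combination combo h₁ h₂
  · obtain ⟨hz₁, hz₁', hw₁, hw₁'⟩ := hj₁ j
    obtain ⟨hz₂, hz₂', hw₂, hw₂'⟩ := hj₂ j
    simp only [Prod.smul_mk, Prod.mk_add_mk, smul_eq_mul, Pi.add_apply, Pi.smul_apply]
    refine ⟨by positivity, ?_, ?_, ?_⟩
    · linear_combination combo hz₁' hz₂' + hab
    · linear_combination combo hw₁ hw₂ + 2 * L * hab
    · linear_combination combo hw₁' hw₂'

variable {ξ θ L} in
theorem mem_boundedReverseL1Epigraph_iff (hθ : 0 ≤ θ) (v : (Fin m → ℝ) × ℝ × ℝ) :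
    v ∈ boundedReverseL1Epigraph ξ θ L ↔ ∃ w z : Fin m → ℝ,
      (∀ j, ∃ k : ℤ, z j = k) ∧ (v, w, z) ∈ reverseL1BigM ξ θ L := by
  obtain ⟨u, s, t⟩ := v
  constructor
  · rintro ⟨hu, hst⟩
    have hbd j : |u j| ≤ L := (norm_le_pi_norm u j).trans hu
    choose k hk using fun j => (le_abs_iff_exists_int_bigM (hbd j)).1 le_rfl
    refine ⟨fun j => |u j|, fun j => k j, fun j => ⟨k j, rfl⟩, hu, by linarith, fun j => hk j⟩
  · rintro ⟨w, z, hz, hu, hst, hwz⟩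
    have hw j : w j ≤ |u j| := by
      obtain ⟨k, hk⟩ := hz j
      exact (le_abs_iff_exists_int_bigM ((norm_le_pi_norm u j).trans hu)).2 ⟨k, hk ▸ hwz j⟩
    have hsum : θ * ∑ j, w j ≤ θ * ∑ j, |u j| := by gcongr with j; exact hw j
    exact ⟨hu, by linarith⟩

theorem isMICPR_boundedReverseL1Epigraph (hθ : 0 ≤ θ) :
    IsMICPR (boundedReverseL1Epigraph ξ θ L) :=
  ⟨m, m, reverseL1BigM ξ θ L, isClosed_reverseL1BigM ξ θ L, convex_reverseL1BigM ξ θ L,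
    mem_boundedReverseL1Epigraph_iff hθ⟩

end

theorem single_piece_reverse_l1_epigraph_micpr_general {n m : ℕ}
    (X : Set (Fin n → ℝ)) (hcomp : IsCompact X)
    (hconv : Convex ℝ X)
    (A : Matrix (Fin m) (Fin n) ℝ) (ahat : Fin m → ℝ)
    (B : Fin n → ℝ) (bhat : ℝ) (ξ0 : Fin m → ℝ) (θ : ℝ) (hθ : 0 ≤ θ) :
    IsMICPR {xt : (Fin n → ℝ) × ℝ | xt.1 ∈ X ∧
      (∑ j, ξ0 j * ((∑ i, A j i * xt.1 i) + ahat j)) +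
        ((∑ i, B i * xt.1 i) + bhat) -
        θ * (∑ j, |(∑ i, A j i * xt.1 i) + ahat j|) ≤ xt.2} := by
  let Φ : (Fin n → ℝ) × ℝ →ᴬ[ℝ] (Fin m → ℝ) × ℝ × ℝ :=
    (LinearMap.toContinuousLinearMap ((A.mulVecLin ∘ₗ LinearMap.fst ℝ _ ℝ).prod
      ((dotProductBilin ℝ ℝ B ∘ₗ LinearMap.fst ℝ _ ℝ).prod
        (LinearMap.snd ℝ _ ℝ)))).toContinuousAffineMap +
    ContinuousAffineMap.const ℝ _ (ahat, bhat, 0)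
  obtain ⟨L, hL⟩ := hcomp.exists_bound_of_continuousOn (f := fun x => A *ᵥ x + ahat) (by fun_prop)
  convert IsMICPR.inter_preimage (isMICPR_boundedReverseL1Epigraph ξ0 θ L hθ)
    (hcomp.isClosed.prod isClosed_univ) (hconv.prod convex_univ) Φ using 1
  have hΦ (x : Fin n → ℝ) (t : ℝ) : Φ (x, t) = (A *ᵥ x + ahat, B ⬝ᵥ x + bhat, t) := by
    simp [Φ]
  ext ⟨x, t⟩
  simp only [Set.mem_inter_iff, Set.mem_prod, Set.mem_univ, and_true, Set.mem_preimage, hΦ,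
    boundedReverseL1Epigraph, Set.mem_ofPred_eq]
  exact ⟨fun ⟨hx, h⟩ => ⟨hx, hL x hx, h⟩, fun ⟨hx, _, h⟩ => ⟨hx, h⟩⟩

/-- For a nonempty compact convex `X ⊆ ℝⁿ`, affine maps `a(x) = Âx + â ∈ ℝ^m`,
`b(x) = B̂ᵀx + b̂ ∈ ℝ`, `ξ⁰ ∈ ℝ^m`, and `θ ≥ 0`, the epigraph
`{(x, t) : x ∈ X, (ξ⁰)ᵀ a(x) + b(x) − θ‖a(x)‖₁ ≤ t}` is MICP-representable. -/
theorem single_piece_reverse_l1_epigraph_micpr {n m : ℕ}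
    (X : Set (Fin n → ℝ)) (hne : X.Nonempty) (hcomp : IsCompact X)
    (hconv : Convex ℝ X)
    (A : Matrix (Fin m) (Fin n) ℝ) (ahat : Fin m → ℝ)
    (B : Fin n → ℝ) (bhat : ℝ) (ξ0 : Fin m → ℝ) (θ : ℝ) (hθ : 0 ≤ θ) :
    IsMICPR {xt : (Fin n → ℝ) × ℝ | xt.1 ∈ X ∧
      (∑ j, ξ0 j * ((∑ i, A j i * xt.1 i) + ahat j)) +
        ((∑ i, B i * xt.1 i) + bhat) -
        θ * (∑ j, |(∑ i, A j i * xt.1 i) + ahat j|) ≤ xt.2} :=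
  single_piece_reverse_l1_epigraph_micpr_general X hcomp hconv A ahat B bhat ξ0 θ hθ
end
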